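/- arXiv:2306.01751 — 7 statements merged into one kernel-verified Lean document; each statement's English description precedes it below -/
import Mathlib

section
/- Let W be a p×k random matrix whose entries are i.i.d. standard normal N(0,1), let β > 0, and define Δ₁ = (β/√k) · max_{1≤i≤p} ‖W_{[i,:]}‖₁, where W_{[i,:]} denotes the i-th row of W and ‖·‖₁ the ℓ₁ norm. Then for any 0 < δ < 1, Pr( Δ₁ ≥ β·√( 2k·log 2 + 2·log(p/δ) ) ) ≤ δ. -/
/-!
Each row of `W` is a standard Gaussian vector in `ℝᵏ`. Since `exp (c|x|) ≤ exp (cx) + exp (-cx)`,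
the moment generating function of `|x|` under `N(0,1)` is at most `2 exp (c²/2)`, so by
independence that of the row's `ℓ₁` norm is at most `(2 exp (c²/2))ᵏ`. The Chernoff bound at
level `s = √(kA)`, with `A = 2k log 2 + 2 log (p/δ)`, gives tail probability at most
`2ᵏ exp (-A/2) = δ/p`, and a union bound over the `p` rows gives `δ`.
-/

open MeasureTheory ProbabilityTheory Real

open scoped NNReal

lemma exp_mul_abs_le_exp_add_exp_neg (c x : ℝ) : exp (c * |x|) ≤ exp (c * x) + exp (-c * x) := by
  rcases abs_choice x with h | h <;> rw [h]
  · exact le_add_of_nonneg_right (exp_nonneg _)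
  · rw [mul_neg, ← neg_mul]
    exact le_add_of_nonneg_left (exp_nonneg _)

lemma integrable_exp_mul_abs_gaussianReal (μ : ℝ) (v : ℝ≥0) (c : ℝ) :
    Integrable (fun x ↦ exp (c * |x|)) (gaussianReal μ v) :=
  ((integrable_exp_mul_gaussianReal c).add (integrable_exp_mul_gaussianReal (-c))).mono'
    (by fun_prop) (.of_forall fun x ↦ by
      rw [Real.norm_of_nonneg (exp_nonneg _)]
      exact exp_mul_abs_le_exp_add_exp_neg c x)

lemma integral_exp_mul_abs_gaussianReal_le (v : ℝ≥0) (c : ℝ) :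
    ∫ x, exp (c * |x|) ∂gaussianReal 0 v ≤ 2 * exp (v * c ^ 2 / 2) := by
  have hmgf (t : ℝ) : ∫ x, exp (t * x) ∂gaussianReal 0 v = exp (v * t ^ 2 / 2) := by
    simpa [mgf] using congrFun (mgf_fun_id_gaussianReal (μ := 0) (v := v)) t
  calc ∫ x, exp (c * |x|) ∂gaussianReal 0 v
      ≤ ∫ x, (exp (c * x) + exp (-c * x)) ∂gaussianReal 0 v :=
        integral_mono (integrable_exp_mul_abs_gaussianReal 0 v c)
          ((integrable_exp_mul_gaussianReal c).add (integrable_exp_mul_gaussianReal (-c)))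
          (exp_mul_abs_le_exp_add_exp_neg c)
    _ = 2 * exp (v * c ^ 2 / 2) := by
        rw [integral_add (integrable_exp_mul_gaussianReal c) (integrable_exp_mul_gaussianReal _),
          hmgf, hmgf, neg_sq, two_mul]

section GaussianVector

variable {ι : Type*} [Fintype ι]

lemma exp_mul_sum_abs (c : ℝ) (r : ι → ℝ) : exp (c * ∑ i, |r i|) = ∏ i, exp (c * |r i|) := by
  rw [Finset.mul_sum, exp_sum]

lemma integrable_exp_mul_sum_abs_pi_gaussianReal (v : ℝ≥0) (c : ℝ) :
    Integrable (fun r : ι → ℝ ↦ exp (c * ∑ i, |r i|)) (Measure.pi fun _ ↦ gaussianReal 0 v) := by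
  simp only [exp_mul_sum_abs]
  exact Integrable.fintype_prod fun _ ↦ integrable_exp_mul_abs_gaussianReal 0 v c

lemma mgf_sum_abs_pi_gaussianReal_le (v : ℝ≥0) (c : ℝ) :
    mgf (fun r : ι → ℝ ↦ ∑ i, |r i|) (Measure.pi fun _ ↦ gaussianReal 0 v) c
      ≤ (2 * exp (v * c ^ 2 / 2)) ^ Fintype.card ι := by
  simp only [mgf, exp_mul_sum_abs]
  rw [integral_fintype_prod_eq_pow (fun x ↦ exp (c * |x|))]
  exact pow_le_pow_left₀ (integral_nonneg fun _ ↦ exp_nonneg _)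
    (integral_exp_mul_abs_gaussianReal_le v c) _

/-- Chernoff bound with the optimal parameter `c = s / (v n)`. -/
lemma pi_gaussianReal_sum_abs_ge_le (v : ℝ≥0) {s : ℝ} (hs : 0 ≤ s) :
    (Measure.pi fun _ : ι ↦ gaussianReal 0 v) {r | s ≤ ∑ i, |r i|}
      ≤ ENNReal.ofReal (2 ^ Fintype.card ι * exp (-s ^ 2 / (2 * v * Fintype.card ι))) := by
  set n : ℝ := (Fintype.card ι : ℝ)
  set c := s / (v * n)
  have hexp : exp (-c * s) * (2 * exp (v * c ^ 2 / 2)) ^ Fintype.card ι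
      = 2 ^ Fintype.card ι * exp (-s ^ 2 / (2 * v * n)) := by
    rw [mul_pow, ← exp_nat_mul, mul_left_comm, ← exp_add]
    congr 2
    rcases eq_or_ne ((v : ℝ) * n) 0 with h | h
    · rw [mul_assoc 2, h]
      simp [c, h]
    · simp only [c, n] at h ⊢
      field_simp
      ring
  rw [← ofReal_measureReal, ← hexp]
  refine ENNReal.ofReal_le_ofReal ((measure_ge_le_exp_mul_mgf s (by positivity)
    (integrable_exp_mul_sum_abs_pi_gaussianReal v c)).trans ?_)
  gcongr
  exact mgf_sum_abs_pi_gaussianReal_le v c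

end GaussianVector

lemma pi_iUnion_preimage_eval_le {ι α : Type*} [Fintype ι] [MeasurableSpace α] (ν : Measure α)
    [IsProbabilityMeasure ν] (B : Set α) :
    (Measure.pi fun _ : ι ↦ ν) (⋃ i, Function.eval i ⁻¹' B) ≤ Fintype.card ι * ν B :=
  calc _ ≤ ∑ i, (Measure.pi fun _ : ι ↦ ν) (Function.eval i ⁻¹' B) :=
        measure_iUnion_fintype_le _ _
    _ ≤ ∑ _ : ι, ν B := Finset.sum_le_sum fun i _ ↦
        (measurePreserving_eval (fun _ : ι ↦ ν) i).measure_preimage_le B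
    _ = Fintype.card ι * ν B := by simp

lemma two_pow_mul_exp_neg_half_eq (k : ℕ) {x : ℝ} (hx : 0 < x) :
    2 ^ k * exp (-(2 * k * log 2 + 2 * log x) / 2) = x⁻¹ := by
  rw [show -(2 * k * log 2 + 2 * log x) / 2 = -log (2 ^ k * x) by
      rw [log_mul (by positivity) hx.ne', log_pow]; ring,
    exp_neg, exp_log (by positivity), mul_inv, mul_inv_cancel_left₀ (by positivity)]

/-- **Bounding Δ₁.** Let `W` be a `p × k` random matrix with i.i.d. standard normal
entries, and let `Δ₁ = (β/√k) · max_i ‖W_{[i,:]}‖₁`. Then for any `0 < δ < 1`,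
`Pr(Δ₁ ≥ β·√(2k·log 2 + 2·log(p/δ))) ≤ δ`. -/
theorem bounding_l1_sensitivity (p k : ℕ) (hp : 0 < p) (hk : 0 < k)
    (β : ℝ) (hβ : 0 < β) (δ : ℝ) (hδ0 : 0 < δ) (hδ1 : δ < 1) :
    (Measure.pi (fun _ : Fin p => Measure.pi (fun _ : Fin k => gaussianReal 0 1)))
      {W : Fin p → Fin k → ℝ |
        β * Real.sqrt (2 * (k : ℝ) * Real.log 2 + 2 * Real.log (p / δ))
          ≤ (β / Real.sqrt k) * ⨆ i : Fin p, ∑ j : Fin k, |W i j|}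
      ≤ ENNReal.ofReal δ := by
  have : Nonempty (Fin p) := Fin.pos_iff_nonempty.1 hp
  have hk' : (0 : ℝ) < k := Nat.cast_pos.2 hk
  have hp' : (0 : ℝ) < p := Nat.cast_pos.2 hp
  set A := 2 * (k : ℝ) * log 2 + 2 * log (p / δ)
  have hA : 0 ≤ A := by
    have := log_pos ((one_lt_div hδ0).2 (hδ1.trans_le (Nat.one_le_cast.2 hp)))
    have := log_pos one_lt_two
    positivity
  set s := √k * √A
  have hevent : {W : Fin p → Fin k → ℝ | β * √A ≤ (β / √k) * ⨆ i, ∑ j, |W i j|}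
      ⊆ ⋃ i, Function.eval i ⁻¹' {r | s ≤ ∑ j, |r j|} := by
    intro W hW
    rw [Set.mem_ofPred_eq, div_mul_eq_mul_div, le_div_iff₀ (by positivity), mul_assoc,
      mul_le_mul_iff_right₀ hβ, mul_comm] at hW
    obtain ⟨i, hi⟩ := exists_eq_ciSup_of_finite (f := fun i ↦ ∑ j, |W i j|)
    exact Set.mem_iUnion.2 ⟨i, hW.trans_eq hi.symm⟩
  have hrow : (Measure.pi fun _ : Fin k ↦ gaussianReal 0 1) {r | s ≤ ∑ j, |r j|}
      ≤ ENNReal.ofReal (δ / p) := by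
    refine (pi_gaussianReal_sum_abs_ge_le 1 (by positivity)).trans_eq (congrArg _ ?_)
    rw [mul_pow, sq_sqrt hk'.le, sq_sqrt hA, Fintype.card_fin, NNReal.coe_one,
      show -(k * A) / (2 * 1 * k) = -A / 2 by field_simp,
      two_pow_mul_exp_neg_half_eq k (by positivity), inv_div]
  calc _ ≤ _ := measure_mono hevent
    _ ≤ Fintype.card (Fin p) * _ := pi_iUnion_preimage_eval_le _ _
    _ ≤ p * ENNReal.ofReal (δ / p) := by rw [Fintype.card_fin]; gcongr
    _ = ENNReal.ofReal δ := by
      rw [← ENNReal.ofReal_natCast, ← ENNReal.ofReal_mul hp'.le, mul_div_cancel₀ _ hp'.ne']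
end

section
/- Let ε > 0, 0 < δ < 1/2, and Δ > 0, and let σ ≥ Δ·√(2(log(1/δ) + ε))/ε. For z ∈ ℝ^k let μ_z denote the product measure on ℝ^k whose j-th factor is the Gaussian measure N(z_j, σ²). Then for any two vectors x, x′ ∈ ℝ^k with ‖x − x′‖₂ ≤ Δ and every Borel set O ⊆ ℝ^k, μ_x(O) ≤ e^ε · μ_{x′}(O) + δ. -/
/-!
Relative to `N(x', σ²I)`, the Gaussian `N(x, σ²I)` has density `exp L`, where
`L y = (2⟪x - x', y - x⟫ + ‖x - x'‖²) / (2σ²)`. Off the event `{L > ε}` this density is at most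
`e^ε`, which gives the term `e^ε μ_{x'}(O)`. The event `{L > ε}` is a half-space
`{⟪x - x', y - x⟫ > t}`, and its `N(x, σ²I)`-measure is at most `exp (-t² / (2σ²‖x - x'‖²))`:
compare `N(x, σ²I)` with the Gaussian centred at the point `x + (t / ‖x - x'‖²)(x - x')` of the
boundary hyperplane, whose density ratio is bounded by that constant on the half-space. The
choice of `σ` makes this bound at most `δ`.
-/

open MeasureTheory ProbabilityTheory Real
open scoped ENNReal NNReal

section PiWithDensity

variable {ι : Type*} [Fintype ι] {α : ι → Type*} [∀ i, MeasurableSpace (α i)]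
  {μ : ∀ i, Measure (α i)} [∀ i, IsProbabilityMeasure (μ i)] {f : ∀ i, α i → ℝ≥0∞}

theorem lintegral_fintype_prod_eq_prod (hf : ∀ i, Measurable (f i)) :
    ∫⁻ x, ∏ i, f i (x i) ∂Measure.pi μ = ∏ i, ∫⁻ t, f i t ∂μ i := by
  rw [lintegral_prod_eq_prod_lintegral_of_indepFun _ _
    (iIndepFun_pi fun i => (hf i).aemeasurable) fun i => (hf i).comp (measurable_pi_apply i)]
  exact Finset.prod_congr rfl fun i _ => (measurePreserving_eval μ i).lintegral_comp (hf i)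

theorem pi_withDensity (hf : ∀ i, Measurable (f i))
    [∀ i, SigmaFinite ((μ i).withDensity (f i))] :
    Measure.pi (fun i => (μ i).withDensity (f i))
      = (Measure.pi μ).withDensity fun x => ∏ i, f i (x i) := by
  refine Measure.pi_eq (μ := fun i => (μ i).withDensity (f i)) fun s hs => ?_
  have hbox : (Set.univ.pi s).indicator (fun x => ∏ i, f i (x i))
      = fun x => ∏ i, (s i).indicator (f i) (x i) := by
    classical
    ext x
    simp [Set.indicator_apply, Finset.prod_ite_zero]
  rw [withDensity_apply _ (.univ_pi hs), ← lintegral_indicator (.univ_pi hs), hbox,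
    lintegral_fintype_prod_eq_prod fun i => (hf i).indicator (hs i)]
  simp_rw [lintegral_indicator (hs _), withDensity_apply _ (hs _)]

end PiWithDensity

theorem gaussianReal_eq_withDensity (m m' : ℝ) {v : ℝ≥0} (hv : v ≠ 0) :
    gaussianReal m v = (gaussianReal m' v).withDensity
      fun t => ENNReal.ofReal (exp (((t - m') ^ 2 - (t - m) ^ 2) / (2 * v))) := by
  rw [gaussianReal_of_var_ne_zero _ hv, gaussianReal_of_var_ne_zero _ hv,
    ← withDensity_mul _ (measurable_gaussianPDF _ _) (by fun_prop)]
  congr 1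
  ext t
  simp only [gaussianPDF, gaussianPDFReal, Pi.mul_apply]
  rw [← ENNReal.ofReal_mul (by positivity), mul_assoc _ (rexp _), ← exp_add]
  congr 3
  ring

section GaussianLogLikelihoodRatio

variable {ι : Type*} [Fintype ι] {v : ℝ≥0}

/-- The log-likelihood ratio `log (dN(m, v I) / dN(m', v I))`, i.e. the privacy loss. -/
noncomputable def gaussianLLR (v : ℝ≥0) (m m' y : ι → ℝ) : ℝ :=
  ∑ i, ((y i - m' i) ^ 2 - (y i - m i) ^ 2) / (2 * v)

theorem gaussianLLR_eq (m m' y : ι → ℝ) :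
    gaussianLLR v m m' y
      = (2 * ∑ i, (m i - m' i) * (y i - m i) + ∑ i, (m i - m' i) ^ 2) / (2 * v) := by
  rw [gaussianLLR, ← Finset.sum_div, Finset.mul_sum, ← Finset.sum_add_distrib]
  congr 1
  exact Finset.sum_congr rfl fun i _ => by ring

theorem pi_gaussianReal_eq_withDensity (hv : v ≠ 0) (m m' : ι → ℝ) :
    Measure.pi (fun i => gaussianReal (m i) v)
      = (Measure.pi fun i => gaussianReal (m' i) v).withDensity
          fun y => ENNReal.ofReal (exp (gaussianLLR v m m' y)) := by
  conv_lhs => enter [1, i]; rw [gaussianReal_eq_withDensity (m i) (m' i) hv]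
  rw [pi_withDensity fun i => by fun_prop]
  congr 1
  ext y
  rw [gaussianLLR, exp_sum, ENNReal.ofReal_prod_of_nonneg fun i _ => (exp_pos _).le]

theorem pi_gaussianReal_le_of_gaussianLLR_le (hv : v ≠ 0) {m m' : ι → ℝ} {S : Set (ι → ℝ)}
    (hS : MeasurableSet S) {r : ℝ} (hr : ∀ y ∈ S, gaussianLLR v m m' y ≤ r) :
    Measure.pi (fun i => gaussianReal (m i) v) S
      ≤ ENNReal.ofReal (exp r) * Measure.pi (fun i => gaussianReal (m' i) v) S := by
  rw [pi_gaussianReal_eq_withDensity hv m m', withDensity_apply _ hS, ← setLIntegral_const]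
  exact setLIntegral_mono measurable_const fun y hy =>
    ENNReal.ofReal_le_ofReal (exp_le_exp.mpr (hr y hy))

theorem pi_gaussianReal_le_exp_mul_add (hv : v ≠ 0) {m m' : ι → ℝ} {A : Set (ι → ℝ)}
    (hA : MeasurableSet A) {r : ℝ} (hr : ∀ y ∉ A, gaussianLLR v m m' y ≤ r)
    {O : Set (ι → ℝ)} (hO : MeasurableSet O) :
    Measure.pi (fun i => gaussianReal (m i) v) O
      ≤ ENNReal.ofReal (exp r) * Measure.pi (fun i => gaussianReal (m' i) v) O
        + Measure.pi (fun i => gaussianReal (m i) v) A :=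
  calc Measure.pi (fun i => gaussianReal (m i) v) O
      ≤ Measure.pi (fun i => gaussianReal (m i) v) (O \ A)
        + Measure.pi (fun i => gaussianReal (m i) v) (O ∩ A) := by
        rw [add_comm]; exact measure_le_inter_add_sdiff _ _ _
    _ ≤ _ := by
      gcongr ?_ + ?_
      · exact (pi_gaussianReal_le_of_gaussianLLR_le hv (hO.diff hA) fun y hy => hr y hy.2).trans
          (by gcongr; exact Set.sdiff_subset)
      · exact measure_mono Set.inter_subset_right

theorem pi_gaussianReal_tail_le (hv : v ≠ 0) (m u : ι → ℝ) (hu : 0 < ∑ i, u i ^ 2) {t : ℝ}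
    (ht : 0 ≤ t) :
    Measure.pi (fun i => gaussianReal (m i) v) {y | t < ∑ i, u i * (y i - m i)}
      ≤ ENNReal.ofReal (exp (-(t ^ 2 / (2 * v * ∑ i, u i ^ 2)))) := by
  set n := ∑ i, u i ^ 2
  have hmeas : MeasurableSet {y : ι → ℝ | t < ∑ i, u i * (y i - m i)} :=
    measurableSet_lt measurable_const (by fun_prop)
  calc Measure.pi (fun i => gaussianReal (m i) v) {y | t < ∑ i, u i * (y i - m i)}
      ≤ ENNReal.ofReal (exp (-(t ^ 2 / (2 * v * n))))
        * Measure.pi (fun i => gaussianReal (m i + t / n * u i) v)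
          {y | t < ∑ i, u i * (y i - m i)} := by
        refine pi_gaussianReal_le_of_gaussianLLR_le hv hmeas fun y hy => ?_
        have hcross : ∑ i, (m i - (m i + t / n * u i)) * (y i - m i)
            = -(t / n) * ∑ i, u i * (y i - m i) := by
          rw [Finset.mul_sum]; exact Finset.sum_congr rfl fun i _ => by ring
        have hsq : ∑ i, (m i - (m i + t / n * u i)) ^ 2 = t ^ 2 / n := by
          calc ∑ i, (m i - (m i + t / n * u i)) ^ 2 = (t / n) ^ 2 * n := by
                rw [Finset.mul_sum]; exact Finset.sum_congr rfl fun i _ => by ring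
            _ = t ^ 2 / n := by field_simp
        calc gaussianLLR v m (fun i => m i + t / n * u i) y
            = (2 * (-(t / n) * ∑ i, u i * (y i - m i)) + t ^ 2 / n) / (2 * v) := by
              rw [gaussianLLR_eq, hcross, hsq]
          _ ≤ (2 * (-(t / n) * t) + t ^ 2 / n) / (2 * v) := by
              rw [neg_mul, neg_mul]; gcongr; exact hy.le
          _ = -(t ^ 2 / (2 * v * n)) := by field_simp; ring
    _ ≤ ENNReal.ofReal (exp (-(t ^ 2 / (2 * v * n)))) := mul_le_of_le_one_right' prob_le_one

end GaussianLogLikelihoodRatio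

theorem half_le_and_mul_le_sq {c ε L n : ℝ} (hε : 0 < ε) (hL : 0 ≤ L) (hn : 0 < n)
    (h : 2 * n * (L + ε) ≤ c * ε ^ 2) :
    n / 2 ≤ c * ε ∧ 2 * c * n * L ≤ (c * ε - n / 2) ^ 2 := by
  have hcε : 2 * n ≤ c * ε := by nlinarith
  refine ⟨by linarith, le_of_mul_le_mul_left ?_ hε⟩
  have h₁ := mul_le_mul_of_nonneg_left h (by linarith : 0 ≤ c * ε)
  have h₂ : 0 ≤ ε * (n * (c * ε) + n ^ 2 / 4) := mul_nonneg hε.le (by nlinarith)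
  linear_combination h₁ + h₂

theorem gaussian_noise_calibration {ε δ Δ σ n : ℝ} (hε : 0 < ε) (hδ0 : 0 < δ) (hδ1 : δ < 1)
    (hn : 0 < n) (hnΔ : √n ≤ Δ) (hσ : Δ * √(2 * (log (1 / δ) + ε)) / ε ≤ σ) :
    0 < σ ^ 2 ∧ n / 2 ≤ σ ^ 2 * ε ∧ log (1 / δ) ≤ (σ ^ 2 * ε - n / 2) ^ 2 / (2 * σ ^ 2 * n) := by
  have hL : 0 ≤ log (1 / δ) := log_nonneg (by rw [le_div_iff₀ hδ0]; linarith)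
  have hΔ : 0 ≤ Δ := (sqrt_nonneg n).trans hnΔ
  have hσε : 2 * n * (log (1 / δ) + ε) ≤ σ ^ 2 * ε ^ 2 := by
    have hsq := pow_le_pow_left₀ (by positivity) hσ 2
    rw [div_pow, mul_pow, sq_sqrt (by linarith), div_le_iff₀ (by positivity)] at hsq
    nlinarith [(sqrt_le_left hΔ).mp hnΔ]
  have hσ2 : 0 < σ ^ 2 := by nlinarith
  obtain ⟨hT, hTL⟩ := half_le_and_mul_le_sq hε hL hn hσε
  exact ⟨hσ2, hT, by rw [le_div_iff₀ (by positivity)]; linarith⟩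

theorem gaussian_mechanism_general (k : ℕ) (ε δ Δ σ : ℝ)
    (hε : 0 < ε) (hδ0 : 0 < δ) (hδ1 : δ < 1 / 2)
    (hσ : σ ≥ Δ * Real.sqrt (2 * (Real.log (1 / δ) + ε)) / ε)
    (x x' : Fin k → ℝ)
    (hadj : Real.sqrt (∑ j : Fin k, (x j - x' j) ^ 2) ≤ Δ)
    (O : Set (Fin k → ℝ)) (hO : MeasurableSet O) :
    (Measure.pi (fun j : Fin k => gaussianReal (x j) ⟨σ ^ 2, sq_nonneg σ⟩)) O
      ≤ ENNReal.ofReal (Real.exp ε)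
          * (Measure.pi (fun j : Fin k => gaussianReal (x' j) ⟨σ ^ 2, sq_nonneg σ⟩)) O
        + ENNReal.ofReal δ := by
  rcases eq_or_ne x x' with rfl | hxx'
  · exact le_add_right (le_mul_of_one_le_left' (ENNReal.one_le_ofReal.mpr (one_le_exp hε.le)))
  set n := ∑ j, (x j - x' j) ^ 2
  have hn : 0 < n := by
    obtain ⟨j, hj⟩ := Function.ne_iff.mp hxx'
    exact Finset.sum_pos' (fun j _ => sq_nonneg _)
      ⟨j, Finset.mem_univ j, pow_two_pos_of_ne_zero (sub_ne_zero.mpr hj)⟩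
  obtain ⟨hσ2, hT, hTδ⟩ := gaussian_noise_calibration hε hδ0 (by linarith) hn hadj hσ
  set v : ℝ≥0 := ⟨σ ^ 2, sq_nonneg σ⟩
  have hvσ : (v : ℝ) = σ ^ 2 := rfl
  have hv : v ≠ 0 := by rw [← NNReal.coe_ne_zero, hvσ]; exact hσ2.ne'
  calc _ ≤ ENNReal.ofReal (exp ε) * (Measure.pi (fun j => gaussianReal (x' j) v)) O
        + Measure.pi (fun j => gaussianReal (x j) v)
            {y | σ ^ 2 * ε - n / 2 < ∑ j, (x j - x' j) * (y j - x j)} := by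
        refine pi_gaussianReal_le_exp_mul_add hv (measurableSet_lt measurable_const (by fun_prop))
          (fun y hy => ?_) hO
        rw [Set.notMem_ofPred_iff, not_lt] at hy
        rw [gaussianLLR_eq, hvσ, div_le_iff₀ (by positivity)]
        linarith
    _ ≤ _ := by
        gcongr
        refine (pi_gaussianReal_tail_le hv x _ hn (by linarith)).trans (ENNReal.ofReal_le_ofReal ?_)
        rwa [← exp_log hδ0, exp_le_exp, hvσ, neg_le, ← log_inv, ← one_div]

/-- **Gaussian mechanism.** Let `ε > 0`, `0 < δ < 1/2`, `Δ > 0`, and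
`σ ≥ Δ·√(2(log(1/δ) + ε))/ε`. For `z ∈ ℝᵏ` let `μ_z` be the product of Gaussians
`N(z_j, σ²)`. Then for any `x, x'` with `‖x − x'‖₂ ≤ Δ` and every Borel set `O`,
`μ_x(O) ≤ e^ε · μ_{x'}(O) + δ`. -/
theorem gaussian_mechanism (k : ℕ) (hk : 0 < k) (ε δ Δ σ : ℝ)
    (hε : 0 < ε) (hδ0 : 0 < δ) (hδ1 : δ < 1 / 2) (hΔ : 0 < Δ)
    (hσ : σ ≥ Δ * Real.sqrt (2 * (Real.log (1 / δ) + ε)) / ε)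
    (x x' : Fin k → ℝ)
    (hadj : Real.sqrt (∑ j : Fin k, (x j - x' j) ^ 2) ≤ Δ)
    (O : Set (Fin k → ℝ)) (hO : MeasurableSet O) :
    (Measure.pi (fun j : Fin k => gaussianReal (x j) ⟨σ ^ 2, sq_nonneg σ⟩)) O
      ≤ ENNReal.ofReal (Real.exp ε)
          * (Measure.pi (fun j : Fin k => gaussianReal (x' j) ⟨σ ^ 2, sq_nonneg σ⟩)) O
        + ENNReal.ofReal δ :=
  gaussian_mechanism_general k ε δ Δ σ hε hδ0 hδ1 hσ x x' hadj O hO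
end

section
/- Let Z₁, Z₂ be independent standard normal random variables, let σ_x, σ_y > 0 and ρ ∈ (−1,1), and set X = σ_x·Z₁ and Y = σ_y·(ρ·Z₁ + √(1−ρ²)·Z₂), so that (X,Y) is centered bivariate normal with variances σ_x², σ_y² and correlation ρ. With r = σ_x/σ_y, it holds that Pr(|X| > |Y|) = (1/π)·[ arctan( (r − ρ)/√(1−ρ²) ) + arctan( (r + ρ)/√(1−ρ²) ) ]. -/
/-!
In polar coordinates the standard Gaussian measure on `ℝ²` is `(2π)⁻¹ r exp(-r²/2) dr dθ`, whose
radial part integrates to `1`, so a cone has probability equal to its angular measure divided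
by `2π`. The event `|Y| < |X|` is the double cone
`|ρ z₁ + a z₂| < r |z₁|` with `a = √(1 - ρ²)`; it is invariant under `z ↦ -z`, and in the
half-plane `z₁ > 0` it is the sector `-arctan ((r + ρ) / a) < θ < arctan ((r - ρ) / a)`,
as one sees by dividing by `cos θ` and solving `|ρ + a tan θ| < r`.
-/

open MeasureTheory ProbabilityTheory Real Set

lemma integral_Ioi_mul_exp_neg_mul_sq {b : ℝ} (hb : 0 < b) :
    ∫ r in Ioi (0 : ℝ), r * rexp (-b * r ^ 2) = (2 * b)⁻¹ := by
  have h := integral_mul_cexp_neg_mul_sq (b := (b : ℂ)) (by simpa using hb)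
  have hcast : ∀ r : ℝ,
      (r : ℂ) * Complex.exp (-b * r ^ 2) = ((r * rexp (-b * r ^ 2) : ℝ) : ℂ) := by
    intro r; push_cast; rfl
  simp_rw [hcast, integral_complex_ofReal] at h
  exact_mod_cast h

lemma gaussianPDFReal_mul_gaussianPDFReal (x y : ℝ) :
    gaussianPDFReal 0 1 x * gaussianPDFReal 0 1 y
      = (2 * π)⁻¹ * rexp (-2⁻¹ * (x ^ 2 + y ^ 2)) := by
  have h2π : (0 : ℝ) ≤ 2 * π := by positivity
  simp only [gaussianPDFReal, NNReal.coe_one, mul_one, sub_zero]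
  rw [mul_mul_mul_comm, ← mul_inv, mul_self_sqrt h2π, ← exp_add]
  ring_nf

lemma gaussianReal_prod_gaussianReal_eq_withDensity :
    (gaussianReal 0 1).prod (gaussianReal 0 1) = volume.withDensity
      (fun z : ℝ × ℝ ↦ ENNReal.ofReal (gaussianPDFReal 0 1 z.1 * gaussianPDFReal 0 1 z.2)) := by
  rw [gaussianReal_of_var_ne_zero _ one_ne_zero, prod_withDensity (measurable_gaussianPDF _ _)
    (measurable_gaussianPDF _ _), Measure.volume_eq_prod]
  simp only [gaussianPDF, ENNReal.ofReal_mul (gaussianPDFReal_nonneg _ _ _)]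

lemma gaussianReal_prod_gaussianReal_apply_of_cone {C : Set (ℝ × ℝ)} (hC : MeasurableSet C)
    (hcone : ∀ r : ℝ, 0 < r → ∀ z, r • z ∈ C ↔ z ∈ C) :
    (gaussianReal 0 1).prod (gaussianReal 0 1) C
      = ENNReal.ofReal ((2 * π)⁻¹ * ∫ θ in -π..π, {θ | (cos θ, sin θ) ∈ C}.indicator 1 θ) := by
  set f : ℝ × ℝ → ℝ := fun z ↦ gaussianPDFReal 0 1 z.1 * gaussianPDFReal 0 1 z.2
  set A := {θ : ℝ | (cos θ, sin θ) ∈ C}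
  have hf_int : Integrable f :=
    Measure.volume_eq_prod ℝ ℝ ▸
      (integrable_gaussianPDFReal 0 1).mul_prod (integrable_gaussianPDFReal 0 1)
  have hf_nonneg : 0 ≤ f := fun z ↦
    mul_nonneg (gaussianPDFReal_nonneg _ _ _) (gaussianPDFReal_nonneg _ _ _)
  have polar : ∀ p ∈ Ioi (0 : ℝ) ×ˢ Ioo (-π) π, p.1 • C.indicator f (polarCoord.symm p)
      = p.1 * rexp (-2⁻¹ * p.1 ^ 2) * ((2 * π)⁻¹ * A.indicator 1 p.2) := by
    rintro ⟨r, θ⟩ ⟨hr, -⟩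
    have hsymm : polarCoord.symm (r, θ) = r • (cos θ, sin θ) := by
      simp [polarCoord_symm_apply, Prod.smul_mk]
    by_cases hθ : (cos θ, sin θ) ∈ C
    · have hrθ : r • (cos θ, sin θ) ∈ C := (hcone r hr _).2 hθ
      rw [hsymm, indicator_of_mem hrθ, indicator_of_mem (show θ ∈ A from hθ)]
      simp only [f, Prod.smul_mk, smul_eq_mul, gaussianPDFReal_mul_gaussianPDFReal, Pi.one_apply]
      rw [show (r * cos θ) ^ 2 + (r * sin θ) ^ 2 = r ^ 2 by
        linear_combination r ^ 2 * cos_sq_add_sin_sq θ]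
      ring
    · have hrθ : r • (cos θ, sin θ) ∉ C := fun h ↦ hθ ((hcone r hr _).1 h)
      rw [hsymm, indicator_of_notMem hrθ, indicator_of_notMem (show θ ∉ A from hθ)]
      simp
  rw [gaussianReal_prod_gaussianReal_eq_withDensity, withDensity_apply _ hC,
    ← ofReal_integral_eq_lintegral_ofReal hf_int.integrableOn (.of_forall hf_nonneg)]
  congr 1
  calc ∫ z in C, f z = ∫ z, C.indicator f z := (integral_indicator hC).symm
    _ = ∫ p in polarCoord.target, p.1 • C.indicator f (polarCoord.symm p) :=
      (integral_comp_polarCoord_symm _).symm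
    _ = ∫ p in Ioi (0 : ℝ) ×ˢ Ioo (-π) π,
          p.1 * rexp (-2⁻¹ * p.1 ^ 2) * ((2 * π)⁻¹ * A.indicator 1 p.2) :=
      setIntegral_congr_fun (measurableSet_Ioi.prod measurableSet_Ioo) polar
    _ = (∫ r in Ioi (0 : ℝ), r * rexp (-2⁻¹ * r ^ 2))
          * ∫ θ in Ioo (-π) π, (2 * π)⁻¹ * A.indicator 1 θ := by
      rw [Measure.volume_eq_prod]
      exact setIntegral_prod_mul (fun r : ℝ ↦ r * rexp (-2⁻¹ * r ^ 2))
        (fun θ : ℝ ↦ (2 * π)⁻¹ * A.indicator 1 θ) _ _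
    _ = (2 * π)⁻¹ * ∫ θ in -π..π, A.indicator 1 θ := by
      rw [integral_Ioi_mul_exp_neg_mul_sq (by norm_num), intervalIntegral.integral_of_le
        (by linarith [pi_pos]), integral_Ioc_eq_integral_Ioo, integral_const_mul]
      norm_num

lemma intervalIntegral_indicator_angle_of_neg_mem {C : Set (ℝ × ℝ)} (hC : MeasurableSet C)
    (hneg : ∀ z, -z ∈ C ↔ z ∈ C) :
    ∫ θ in -π..π, {θ | (cos θ, sin θ) ∈ C}.indicator (1 : ℝ → ℝ) θ
      = 2 * ∫ θ in -(π / 2)..π / 2, {θ | (cos θ, sin θ) ∈ C}.indicator 1 θ := by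
  set A := {θ : ℝ | (cos θ, sin θ) ∈ C}
  have hA : MeasurableSet A := hC.preimage (by fun_prop)
  have hper : Function.Periodic (A.indicator (1 : ℝ → ℝ)) π := by
    intro θ
    have : θ + π ∈ A ↔ θ ∈ A := by
      simp only [A, mem_ofPred_eq, cos_add_pi, sin_add_pi, ← Prod.neg_mk, hneg]
    by_cases hθ : θ ∈ A
    · rw [indicator_of_mem hθ, indicator_of_mem (this.2 hθ), Pi.one_apply, Pi.one_apply]
    · rw [indicator_of_notMem hθ, indicator_of_notMem (mt this.1 hθ)]
  have hint : ∀ a b, IntervalIntegrable (A.indicator (1 : ℝ → ℝ)) volume a b := fun a b ↦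
    intervalIntegrable_iff.2 ((integrableOn_const measure_Ioc_lt_top.ne).indicator hA)
  calc ∫ θ in -π..π, A.indicator 1 θ = ∫ θ in -π..-π + (2 : ℤ) • π, A.indicator 1 θ := by
        rw [two_zsmul]; ring_nf
    _ = (2 : ℤ) • ∫ θ in -π..-π + π, A.indicator 1 θ :=
        hper.intervalIntegral_add_zsmul_eq 2 (-π) hint
    _ = 2 * ∫ θ in -(π / 2)..π / 2, A.indicator 1 θ := by
        rw [hper.intervalIntegral_add_eq (-π) (-(π / 2)), two_zsmul, two_mul]; ring_nf

lemma abs_add_mul_sin_lt_mul_abs_cos_iff {ρ a r θ : ℝ} (ha : 0 < a)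
    (hθ : θ ∈ Ioo (-(π / 2)) (π / 2)) :
    |ρ * cos θ + a * sin θ| < r * |cos θ|
      ↔ θ ∈ Ioo (-arctan ((r + ρ) / a)) (arctan ((r - ρ) / a)) := by
  have hcos : 0 < cos θ := cos_pos_of_mem_Ioo hθ
  have htan : ρ * cos θ + a * sin θ = cos θ * (ρ + a * tan θ) := by
    rw [tan_eq_sin_div_cos]; field_simp
  obtain ⟨t, rfl⟩ : ∃ t, arctan t = θ := ⟨tan θ, arctan_tan hθ.1 hθ.2⟩
  rw [htan, abs_mul, abs_of_pos hcos, mul_comm r, mul_lt_mul_iff_right₀ hcos, abs_lt, tan_arctan,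
    ← arctan_neg, mem_Ioo, arctan_lt_arctan_iff, arctan_lt_arctan_iff, ← neg_div, div_lt_iff₀ ha,
    lt_div_iff₀ ha]
  constructor <;> rintro ⟨h₁, h₂⟩ <;> constructor <;> linarith

lemma intervalIntegral_indicator_angle_abs_lt {ρ a r : ℝ} (ha : 0 < a) (hr : 0 ≤ r) :
    ∫ θ in -(π / 2)..π / 2,
        {θ | (cos θ, sin θ) ∈ {z : ℝ × ℝ | |ρ * z.1 + a * z.2| < r * |z.1|}}.indicator 1 θ
      = arctan ((r - ρ) / a) + arctan ((r + ρ) / a) := by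
  set A := {θ | (cos θ, sin θ) ∈ {z : ℝ × ℝ | |ρ * z.1 + a * z.2| < r * |z.1|}}
  have hA : MeasurableSet A :=
    measurableSet_lt (f := fun θ ↦ |ρ * cos θ + a * sin θ|) (g := fun θ ↦ r * |cos θ|)
      (by fun_prop) (by fun_prop)
  have hinter :
      Ioo (-(π / 2)) (π / 2) ∩ A = Ioo (-arctan ((r + ρ) / a)) (arctan ((r - ρ) / a)) := by
    ext θ
    refine ⟨fun ⟨hθ, hθA⟩ ↦ (abs_add_mul_sin_lt_mul_abs_cos_iff ha hθ).1 hθA, fun hθ ↦ ?_⟩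
    have hθ' : θ ∈ Ioo (-(π / 2)) (π / 2) :=
      ⟨by linarith [hθ.1, arctan_lt_pi_div_two ((r + ρ) / a)],
        by linarith [hθ.2, arctan_lt_pi_div_two ((r - ρ) / a)]⟩
    exact ⟨hθ', (abs_add_mul_sin_lt_mul_abs_cos_iff ha hθ').2 hθ⟩
  have hle : -arctan ((r + ρ) / a) ≤ arctan ((r - ρ) / a) := by
    rw [← arctan_neg, arctan_le_arctan_iff, ← neg_div]
    exact div_le_div_of_nonneg_right (by linarith) ha.le
  rw [intervalIntegral.integral_of_le (by linarith [pi_pos]), integral_Ioc_eq_integral_Ioo,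
    setIntegral_indicator hA, hinter]
  simp only [Pi.one_apply, setIntegral_const, volume_real_Ioo_of_le hle, smul_eq_mul, mul_one]
  ring

/-- For a centered bivariate normal pair `(X, Y)` with variances `σ_x², σ_y²` and
correlation `ρ ∈ (−1,1)`, realized as `X = σ_x·Z₁`, `Y = σ_y·(ρZ₁ + √(1−ρ²)Z₂)` for
independent standard normals `Z₁, Z₂`, with `r = σ_x/σ_y`:
`Pr(|X| > |Y|) = (1/π)·[arctan((r−ρ)/√(1−ρ²)) + arctan((r+ρ)/√(1−ρ²))]`. -/
theorem bivariate_normal_abs_gt_prob (σx σy ρ : ℝ) (hσx : 0 < σx) (hσy : 0 < σy)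
    (hρ : ρ ∈ Set.Ioo (-1 : ℝ) 1) :
    (Measure.prod (gaussianReal 0 1) (gaussianReal 0 1))
      {z : ℝ × ℝ |
        |σy * (ρ * z.1 + Real.sqrt (1 - ρ ^ 2) * z.2)| < |σx * z.1|}
      = ENNReal.ofReal ((1 / π)
          * (Real.arctan ((σx / σy - ρ) / Real.sqrt (1 - ρ ^ 2))
              + Real.arctan ((σx / σy + ρ) / Real.sqrt (1 - ρ ^ 2)))) := by
  set a := √(1 - ρ ^ 2)
  have ha : 0 < a := sqrt_pos.2 (by nlinarith [hρ.1, hρ.2])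
  set C := {z : ℝ × ℝ | |ρ * z.1 + a * z.2| < σx / σy * |z.1|}
  have hS : {z : ℝ × ℝ | |σy * (ρ * z.1 + a * z.2)| < |σx * z.1|} = C := by
    ext z
    rw [mem_ofPred_eq, mem_ofPred_eq, abs_mul, abs_mul, abs_of_pos hσx, abs_of_pos hσy,
      div_mul_eq_mul_div, lt_div_iff₀ hσy, mul_comm σy]
  have hC : MeasurableSet C := measurableSet_lt (by fun_prop) (by fun_prop)
  have hcone : ∀ t : ℝ, 0 < t → ∀ z, t • z ∈ C ↔ z ∈ C := by
    intro t ht z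
    simp only [C, mem_ofPred_eq, Prod.smul_fst, Prod.smul_snd, smul_eq_mul]
    rw [show ρ * (t * z.1) + a * (t * z.2) = t * (ρ * z.1 + a * z.2) by ring, abs_mul, abs_mul,
      abs_of_pos ht, mul_left_comm, mul_lt_mul_iff_right₀ ht]
  have hneg : ∀ z, -z ∈ C ↔ z ∈ C := by
    intro z
    simp only [C, mem_ofPred_eq, Prod.fst_neg, Prod.snd_neg, mul_neg, ← neg_add, abs_neg]
  rw [hS, gaussianReal_prod_gaussianReal_apply_of_cone hC hcone,
    intervalIntegral_indicator_angle_of_neg_mem hC hneg,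
    intervalIntegral_indicator_angle_abs_lt ha (div_pos hσx hσy).le]
  congr 1
  field_simp
end

section
/- Let Z₁, Z₂ be independent standard normal random variables, let σ_x, σ_y > 0 and ρ ∈ (−1,1), and set X = σ_x·Z₁ and Y = σ_y·(ρ·Z₁ + √(1−ρ²)·Z₂). Suppose r = σ_x/σ_y ≤ 1. Then Pr(|X| > |Y|) ≤ (2/π)·arctan(r), and equality holds when ρ = 0; i.e., over all correlations ρ ∈ (−1,1), the probability Pr(|X| > |Y|) is maximized at ρ = 0 with maximal value (2/π)·arctan(r). -/
/-!
In polar coordinates the standard Gaussian measure on the plane is the product of the radial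
law `R e^{-R²/2} dR` and the uniform law on the angle, so the double cone of lines through the
origin with slopes in `(c, a)` has probability `(arctan a - arctan c) / π`. In the coordinates
`(Z₁, Z₂)` the event `|Y| < |X|` is the double cone with slopes in `(-(r + ρ)/s, (r - ρ)/s)`,
where `s = √(1 - ρ²)`, which gives `Pr(|X| > |Y|) = (arctan ((r - ρ)/s) + arctan ((r + ρ)/s)) / π`.
By the tangent addition formula the numerator is `arctan (2rs / (1 - r²))`, which is at most
`arctan (2r / (1 - r²)) = 2 arctan r` when `r < 1`, and it is exactly `π/2 = 2 arctan 1`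
when `r = 1`.
-/

open MeasureTheory ProbabilityTheory Real Set

lemma lintegral_Ioi_mul_exp_neg_sq_div_two :
    ∫⁻ x in Ioi (0 : ℝ), ENNReal.ofReal (x * rexp (-x ^ 2 / 2)) = 1 := by
  have hint : IntegrableOn (fun x : ℝ ↦ x * rexp (-x ^ 2 / 2)) (Ioi 0) := by
    refine (integrable_mul_exp_neg_mul_sq one_half_pos).integrableOn.congr_fun
      (fun x _ ↦ ?_) measurableSet_Ioi
    ring_nf
  have hval : ∫ x in Ioi (0 : ℝ), x * rexp (-x ^ 2 / 2) = 1 := by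
    have h := integral_rpow_mul_exp_neg_mul_rpow (p := 2) (q := 1) (b := 1 / 2) two_pos
      (by norm_num) (by norm_num)
    norm_num at h
    convert h using 3 with x
    ring_nf
  rw [← ofReal_integral_eq_lintegral_ofReal hint, hval, ENNReal.ofReal_one]
  exact (ae_restrict_iff' measurableSet_Ioi).2
    (ae_of_all _ fun x hx ↦ mul_nonneg (le_of_lt hx) (exp_pos _).le)

lemma cos_pos_iff_of_mem_Ioo {θ : ℝ} (hθ : θ ∈ Ioo (-π) π) :
    0 < cos θ ↔ θ ∈ Ioo (-(π / 2)) (π / 2) := by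
  refine ⟨fun hcos ↦ ⟨?_, ?_⟩, cos_pos_of_mem_Ioo⟩
  · by_contra! h
    have := cos_nonpos_of_pi_div_two_le_of_le (x := -θ) (by linarith) (by linarith [hθ.1])
    rw [cos_neg] at this
    linarith
  · by_contra! h
    have := cos_nonpos_of_pi_div_two_le_of_le h (by linarith [hθ.2])
    linarith

lemma tan_mem_Ioo_iff {θ : ℝ} (hθ : θ ∈ Ioo (-(π / 2)) (π / 2)) (c a : ℝ) :
    tan θ ∈ Ioo c a ↔ θ ∈ Ioo (arctan c) (arctan a) := by
  conv_rhs => rw [← arctan_tan hθ.1 hθ.2]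
  simp only [mem_Ioo, arctan_lt_arctan_iff]

def rightSlopeSector (c a : ℝ) : Set (ℝ × ℝ) := {z | 0 < z.1 ∧ z.2 / z.1 ∈ Ioo c a}

def slopeCone (c a : ℝ) : Set (ℝ × ℝ) := {z | z.1 ≠ 0 ∧ z.2 / z.1 ∈ Ioo c a}

lemma measurableSet_rightSlopeSector (c a : ℝ) : MeasurableSet (rightSlopeSector c a) :=
  (measurableSet_lt measurable_const measurable_fst).inter
    ((measurable_snd.div measurable_fst) measurableSet_Ioo)

lemma slopeCone_eq_union_neg (c a : ℝ) :
    slopeCone c a = rightSlopeSector c a ∪ -rightSlopeSector c a := by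
  ext z
  simp only [slopeCone, rightSlopeSector, mem_union, mem_neg, mem_ofPred_eq, Prod.fst_neg,
    Prod.snd_neg, neg_div_neg_eq, neg_pos, ne_iff_lt_or_gt, or_and_right]
  tauto

lemma polarCoord_symm_mem_rightSlopeSector_iff {c a : ℝ} {p : ℝ × ℝ}
    (hp : p ∈ polarCoord.target) :
    polarCoord.symm p ∈ rightSlopeSector c a ↔ p.2 ∈ Ioo (arctan c) (arctan a) := by
  obtain ⟨hR, hθ⟩ := hp
  have hR : 0 < p.1 := hR
  simp only [rightSlopeSector, polarCoord_symm_apply, mem_ofPred_eq, mul_pos_iff_of_pos_left hR,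
    mul_div_mul_left _ _ hR.ne', ← tan_eq_sin_div_cos, cos_pos_iff_of_mem_Ioo hθ]
  constructor
  · rintro ⟨hθ', htan⟩
    exact (tan_mem_Ioo_iff hθ' c a).1 htan
  · intro h
    have hθ' : p.2 ∈ Ioo (-(π / 2)) (π / 2) :=
      ⟨(neg_pi_div_two_lt_arctan c).trans h.1, h.2.trans (arctan_lt_pi_div_two a)⟩
    exact ⟨hθ', (tan_mem_Ioo_iff hθ' c a).2 h⟩

lemma gaussianPDF_zero_one_mul (x y : ℝ) :
    gaussianPDF 0 1 x * gaussianPDF 0 1 y =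
      ENNReal.ofReal ((2 * π)⁻¹ * rexp (-(x ^ 2 + y ^ 2) / 2)) := by
  rw [gaussianPDF, gaussianPDF, ← ENNReal.ofReal_mul (gaussianPDFReal_nonneg 0 1 x)]
  congr 1
  have h : (√(2 * π))⁻¹ * (√(2 * π))⁻¹ = (2 * π)⁻¹ := by
    rw [← mul_inv, mul_self_sqrt (by positivity)]
  simp only [gaussianPDFReal, NNReal.coe_one, mul_one, sub_zero]
  rw [show -(x ^ 2 + y ^ 2) / 2 = -x ^ 2 / 2 + -y ^ 2 / 2 by ring, exp_add]
  linear_combination (rexp (-x ^ 2 / 2) * rexp (-y ^ 2 / 2)) * h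

lemma gaussianReal_prod_eq_withDensity :
    (gaussianReal 0 1).prod (gaussianReal 0 1) = volume.withDensity
      fun z : ℝ × ℝ ↦ ENNReal.ofReal ((2 * π)⁻¹ * rexp (-(z.1 ^ 2 + z.2 ^ 2) / 2)) := by
  simp only [gaussianReal_of_var_ne_zero 0 one_ne_zero, ← gaussianPDF_zero_one_mul]
  exact prod_withDensity (measurable_gaussianPDF 0 1) (measurable_gaussianPDF 0 1)

lemma gaussianReal_prod_map_neg (v w : NNReal) :
    ((gaussianReal 0 v).prod (gaussianReal 0 w)).map Neg.neg =
      (gaussianReal 0 v).prod (gaussianReal 0 w) := by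
  rw [show (Neg.neg : ℝ × ℝ → ℝ × ℝ) = Prod.map Neg.neg Neg.neg from rfl,
    ← Measure.map_prod_map _ _ measurable_neg measurable_neg, gaussianReal_map_neg,
    gaussianReal_map_neg, neg_zero]

lemma gaussianReal_prod_rightSlopeSector (c a : ℝ) :
    (gaussianReal 0 1).prod (gaussianReal 0 1) (rightSlopeSector c a) =
      ENNReal.ofReal ((arctan a - arctan c) / (2 * π)) := by
  have hradial : Measurable fun R : ℝ ↦ ENNReal.ofReal (R * rexp (-R ^ 2 / 2)) := by fun_prop
  have hangular : Measurable ((Ioo (arctan c) (arctan a)).indicator (1 : ℝ → ENNReal)) :=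
    measurable_const.indicator measurableSet_Ioo
  have hpolar : ∀ p ∈ polarCoord.target,
      ENNReal.ofReal p.1 • (rightSlopeSector c a).indicator
        (fun z ↦ ENNReal.ofReal ((2 * π)⁻¹ * rexp (-(z.1 ^ 2 + z.2 ^ 2) / 2))) (polarCoord.symm p) =
      ENNReal.ofReal (2 * π)⁻¹ * (ENNReal.ofReal (p.1 * rexp (-p.1 ^ 2 / 2)) *
        (Ioo (arctan c) (arctan a)).indicator 1 p.2) := by
    intro p hp
    by_cases hθ : p.2 ∈ Ioo (arctan c) (arctan a)
    · have hnorm : (p.1 * cos p.2) ^ 2 + (p.1 * sin p.2) ^ 2 = p.1 ^ 2 := by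
        linear_combination p.1 ^ 2 * sin_sq_add_cos_sq p.2
      rw [indicator_of_mem ((polarCoord_symm_mem_rightSlopeSector_iff hp).2 hθ),
        indicator_of_mem hθ, polarCoord_symm_apply, hnorm, Pi.one_apply, mul_one, smul_eq_mul,
        ← ENNReal.ofReal_mul hp.1.le, ← ENNReal.ofReal_mul (by positivity)]
      ring_nf
    · rw [indicator_of_notMem (mt (polarCoord_symm_mem_rightSlopeSector_iff hp).1 hθ),
        indicator_of_notMem hθ, smul_zero, mul_zero, mul_zero]
  have hangle : volume (Ioo (arctan c) (arctan a) ∩ Ioo (-π) π) =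
      ENNReal.ofReal (arctan a - arctan c) := by
    rw [inter_eq_left.2 (Ioo_subset_Ioo _ _), volume_Ioo]
    · linarith [neg_pi_div_two_lt_arctan c, pi_pos]
    · linarith [arctan_lt_pi_div_two a, pi_pos]
  rw [gaussianReal_prod_eq_withDensity, withDensity_apply _ (measurableSet_rightSlopeSector c a),
    ← lintegral_indicator (measurableSet_rightSlopeSector c a), ← lintegral_comp_polarCoord_symm,
    setLIntegral_congr_fun polarCoord.open_target.measurableSet hpolar,
    lintegral_const_mul' _ _ ENNReal.ofReal_ne_top, polarCoord_target, Measure.volume_eq_prod,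
    ← Measure.prod_restrict, lintegral_prod_mul hradial.aemeasurable hangular.aemeasurable,
    lintegral_Ioi_mul_exp_neg_sq_div_two, lintegral_indicator_one measurableSet_Ioo,
    Measure.restrict_apply measurableSet_Ioo, hangle, one_mul,
    ← ENNReal.ofReal_mul (by positivity), div_eq_inv_mul]

lemma gaussianReal_prod_slopeCone (c a : ℝ) :
    (gaussianReal 0 1).prod (gaussianReal 0 1) (slopeCone c a) =
      ENNReal.ofReal ((arctan a - arctan c) / π) := by
  have hS := measurableSet_rightSlopeSector c a
  have hdisj : Disjoint (rightSlopeSector c a) (-rightSlopeSector c a) :=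
    disjoint_left.2 fun z hz hz' ↦ by linarith [hz.1, neg_pos.1 hz'.1]
  rw [slopeCone_eq_union_neg, measure_union hdisj hS.neg, ← Set.neg_preimage,
    ← Measure.map_apply measurable_neg hS, gaussianReal_prod_map_neg,
    gaussianReal_prod_rightSlopeSector, ← two_mul, ← ENNReal.ofReal_ofNat 2,
    ← ENNReal.ofReal_mul zero_le_two]
  congr 1
  field_simp

lemma setOf_abs_lt_abs_eq_slopeCone {σx σy ρ s : ℝ} (hσy : σy ≠ 0) (hs : 0 < s) :
    {z : ℝ × ℝ | |σy * (ρ * z.1 + s * z.2)| < |σx * z.1|} =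
      slopeCone (-(|σx / σy| + ρ) / s) ((|σx / σy| - ρ) / s) := by
  ext z
  simp only [slopeCone, mem_ofPred_eq, mem_Ioo]
  rcases eq_or_ne z.1 0 with h | h
  · simp [h]
    positivity
  · have hfactor : ρ * z.1 + s * z.2 = z.1 * (ρ + s * (z.2 / z.1)) := by field_simp
    rw [hfactor, abs_mul, abs_mul, abs_mul, mul_left_comm, mul_comm |σx|,
      mul_lt_mul_iff_right₀ (abs_pos.2 h), ← lt_div_iff₀' (abs_pos.2 hσy), ← abs_div, abs_lt,
      div_lt_iff₀ hs, lt_div_iff₀ hs]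
    constructor
    · rintro ⟨h1, h2⟩
      exact ⟨h, by linarith, by linarith⟩
    · rintro ⟨-, h1, h2⟩
      constructor <;> linarith

lemma gaussianReal_prod_setOf_abs_lt_abs {σx σy ρ : ℝ} (hσy : σy ≠ 0)
    (hρ : ρ ∈ Ioo (-1 : ℝ) 1) :
    (gaussianReal 0 1).prod (gaussianReal 0 1)
        {z : ℝ × ℝ | |σy * (ρ * z.1 + √(1 - ρ ^ 2) * z.2)| < |σx * z.1|} =
      ENNReal.ofReal ((arctan ((|σx / σy| - ρ) / √(1 - ρ ^ 2)) +
        arctan ((|σx / σy| + ρ) / √(1 - ρ ^ 2))) / π) := by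
  have hs : 0 < √(1 - ρ ^ 2) := sqrt_pos.2 (by nlinarith [hρ.1, hρ.2])
  rw [setOf_abs_lt_abs_eq_slopeCone hσy hs, gaussianReal_prod_slopeCone, neg_div, arctan_neg,
    sub_neg_eq_add]

lemma arctan_add_arctan_le_two_mul_arctan {r ρ : ℝ} (hr₀ : 0 < r) (hr₁ : r ≤ 1)
    (hρ : ρ ∈ Ioo (-1 : ℝ) 1) :
    arctan ((r - ρ) / √(1 - ρ ^ 2)) + arctan ((r + ρ) / √(1 - ρ ^ 2)) ≤ 2 * arctan r := by
  obtain ⟨hρ₁, hρ₂⟩ := hρ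
  have hs2 : √(1 - ρ ^ 2) ^ 2 = 1 - ρ ^ 2 := sq_sqrt (by nlinarith)
  set s := √(1 - ρ ^ 2)
  have hs : 0 < s := sqrt_pos.2 (by nlinarith)
  have hs1 : s ≤ 1 := by nlinarith
  rcases hr₁.eq_or_lt with rfl | hr_lt
  · have hinv : (1 + ρ) / s = ((1 - ρ) / s)⁻¹ := by
      rw [inv_div, div_eq_div_iff hs.ne' (by linarith)]
      linear_combination -hs2
    rw [hinv, arctan_inv_of_pos (div_pos (by linarith) hs), arctan_one]
    linarith
  · have h1r : 0 < 1 - r ^ 2 := by nlinarith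
    have hprod : 1 - (r - ρ) / s * ((r + ρ) / s) = (1 - r ^ 2) / s ^ 2 := by
      field_simp
      linear_combination hs2
    rw [arctan_add (by nlinarith [div_pos h1r (pow_pos hs 2)]), two_mul_arctan (by linarith) hr_lt,
      hprod]
    apply arctan_strictMono.monotone
    rw [← add_div, show r - ρ + (r + ρ) = 2 * r by ring, div_div_div_eq,
      div_le_div_iff₀ (by positivity) h1r]
    nlinarith [mul_nonneg (mul_nonneg hr₀.le h1r.le) (mul_nonneg hs.le (sub_nonneg.2 hs1))]

/-- For a centered bivariate normal pair `(X, Y)` with variances `σ_x², σ_y²` and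
correlation `ρ ∈ (−1,1)`, realized as `X = σ_x·Z₁`, `Y = σ_y·(ρZ₁ + √(1−ρ²)Z₂)` for
independent standard normals, if `r = σ_x/σ_y ≤ 1` then
`Pr(|X| > |Y|) ≤ (2/π)·arctan(r)`, with equality at `ρ = 0`: the probability over all
correlations is maximized at `ρ = 0`, with maximal value `(2/π)·arctan(r)`. -/
theorem bivariate_normal_abs_gt_prob_max (σx σy ρ : ℝ) (hσx : 0 < σx) (hσy : 0 < σy)
    (hρ : ρ ∈ Set.Ioo (-1 : ℝ) 1) (hr : σx / σy ≤ 1) :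
    (Measure.prod (gaussianReal 0 1) (gaussianReal 0 1))
        {z : ℝ × ℝ |
          |σy * (ρ * z.1 + Real.sqrt (1 - ρ ^ 2) * z.2)| < |σx * z.1|}
      ≤ ENNReal.ofReal ((2 / π) * Real.arctan (σx / σy))
    ∧ (Measure.prod (gaussianReal 0 1) (gaussianReal 0 1))
        {z : ℝ × ℝ |
          |σy * ((0 : ℝ) * z.1 + Real.sqrt (1 - (0 : ℝ) ^ 2) * z.2)| < |σx * z.1|}
      = ENNReal.ofReal ((2 / π) * Real.arctan (σx / σy)) := by
  have hr₀ : 0 < σx / σy := div_pos hσx hσy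
  constructor
  · rw [gaussianReal_prod_setOf_abs_lt_abs hσy.ne' hρ, abs_of_pos hr₀, div_mul_eq_mul_div]
    gcongr
    exact arctan_add_arctan_le_two_mul_arctan hr₀ hr hρ
  · rw [gaussianReal_prod_setOf_abs_lt_abs hσy.ne' ⟨by norm_num, by norm_num⟩, abs_of_pos hr₀]
    congr 1
    norm_num
    ring
end

section
/- Let Z₁, Z₂ be independent standard normal random variables, let σ_x, σ_y > 0 and ρ ∈ (−1,1), and set X = σ_x·Z₁ and Y = σ_y·(ρ·Z₁ + √(1−ρ²)·Z₂). With r = σ_x/σ_y, the conditional expectation of |X| given the event {|X| > |Y|} equals E[ |X| · 1{|X|>|Y|} ] / Pr(|X|>|Y|) = σ_x·√(π/2) · [ (r−ρ)/√(1+r²−2rρ) + (r+ρ)/√(1+r²+2rρ) ] / [ arctan( (r−ρ)/√(1−ρ²) ) + arctan( (r+ρ)/√(1−ρ²) ) ]. -/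
/-!
Condition on the first coordinate. Given `Z₁ = x`, the event `|Y| < |X|` is the interval
`|ρ x + s Z₂| < r |x|` (`r = σx / σy`, `s = √(1 - ρ²)`), of standard normal mass
`Φ₀(a |x|) + Φ₀(b |x|)` with `a = (r - ρ) / s`, `b = (r + ρ) / s`. Hence the probability of the event
and the first moment of `|X|` on it reduce to `∫₀^∞ φ(t) Φ₀(c t) dt = arctan c / (2π)`, found by
differentiating in `c`, and `∫₀^∞ t φ(t) Φ₀(c t) dt = c / (2 √(2π) √(1 + c²))`, which has an explicit
antiderivative because `φ(t) φ(c t) = φ(√(1 + c²) t) / √(2π)`.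
-/

open MeasureTheory ProbabilityTheory Real Set Filter Topology
open scoped Interval

section Fubini

variable {α β E : Type*} [MeasurableSpace α] [MeasurableSpace β]
  [NormedAddCommGroup E] [NormedSpace ℝ E] [CompleteSpace E] {μ : Measure α} {ν : Measure β}

lemma MeasureTheory.setIntegral_prod_comp_fst [SFinite μ] [IsFiniteMeasure ν]
    {s : Set (α × β)} (hs : MeasurableSet s) {f : α → E} (hf : Integrable f μ) :
    ∫ z in s, f z.1 ∂μ.prod ν = ∫ x, ν.real (Prod.mk x ⁻¹' s) • f x ∂μ := by
  rw [← integral_indicator hs, integral_prod _ ((hf.comp_fst ν).indicator hs)]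
  congr 1 with x
  rw [← integral_indicator_const _ (measurable_prodMk_left hs)]
  rfl

end Fubini

lemma div_div_sqrt_one_add_sq_div {s : ℝ} (hs : 0 < s) (u : ℝ) :
    u / s / √(1 + (u / s) ^ 2) = u / √(s ^ 2 + u ^ 2) := by
  rw [show 1 + (u / s) ^ 2 = (s ^ 2 + u ^ 2) / s ^ 2 by field_simp, sqrt_div' _ (sq_nonneg s),
    sqrt_sq hs.le, div_div_div_cancel_right₀ hs.ne']

noncomputable section

namespace StdGaussian

def phi (x : ℝ) : ℝ := (√(2 * π))⁻¹ * exp (-x ^ 2 / 2)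

/-- `Phi₀ x = Φ x - 1 / 2`, with `Φ` the standard normal distribution function. -/
def Phi₀ (x : ℝ) : ℝ := ∫ t in (0)..x, phi t

lemma phi_nonneg (x : ℝ) : 0 ≤ phi x := by unfold phi; positivity

@[fun_prop] lemma continuous_phi : Continuous phi := by unfold phi; fun_prop

lemma phi_abs (x : ℝ) : phi |x| = phi x := by simp [phi]

lemma phi_zero : phi 0 = (√(2 * π))⁻¹ := by simp [phi]

lemma phi_neg (x : ℝ) : phi (-x) = phi x := by simp [phi]

lemma phi_le_phi_zero (x : ℝ) : phi x ≤ phi 0 := by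
  unfold phi
  exact mul_le_mul_of_nonneg_left (exp_le_exp.2 (by nlinarith [sq_nonneg x])) (by positivity)

lemma gaussianPDFReal_zero_one : gaussianPDFReal 0 1 = phi := by
  ext x; simp [gaussianPDFReal, phi]

lemma integrable_phi : Integrable phi :=
  gaussianPDFReal_zero_one ▸ integrable_gaussianPDFReal 0 1

lemma integral_phi : ∫ x, phi x = 1 :=
  gaussianPDFReal_zero_one ▸ integral_gaussianPDFReal_eq_one 0 one_ne_zero

lemma integral_gaussianReal_comp_abs (f : ℝ → ℝ) :
    ∫ x, f |x| ∂gaussianReal 0 1 = 2 * ∫ t in Ioi 0, phi t * f t := by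
  rw [integral_gaussianReal_eq_integral_smul one_ne_zero, gaussianPDFReal_zero_one,
    ← integral_comp_abs (f := fun t => phi t * f t)]
  simp only [smul_eq_mul, phi_abs]

lemma integral_Ioi_phi : ∫ t in Ioi 0, phi t = 1 / 2 := by
  have := integral_gaussianReal_comp_abs (fun _ => 1)
  simp only [integral_const, probReal_univ, smul_eq_mul, mul_one] at this
  linarith

lemma hasDerivAt_phi (x : ℝ) : HasDerivAt phi (-x * phi x) x := by
  have h : HasDerivAt (fun x : ℝ => -x ^ 2 / 2) (-x) x := by
    simpa using ((hasDerivAt_pow 2 x).neg.div_const 2).congr_deriv (by ring)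
  exact (h.exp.const_mul _).congr_deriv (by simp only [phi]; ring)

lemma tendsto_phi_atTop : Tendsto phi atTop (𝓝 0) := by
  have h : Tendsto (fun x : ℝ => -x ^ 2 / 2) atTop atBot :=
    (tendsto_neg_atTop_atBot.comp (tendsto_pow_atTop two_ne_zero)).atBot_div_const two_pos
  unfold phi
  simpa only [Function.comp_def, mul_zero] using (tendsto_exp_atBot.comp h).const_mul _

lemma phi_mul_phi (c t : ℝ) : phi t * phi (c * t) = (√(2 * π))⁻¹ * phi (√(1 + c ^ 2) * t) := by
  have h : (√(1 + c ^ 2) * t) ^ 2 = t ^ 2 + (c * t) ^ 2 := by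
    rw [mul_pow, sq_sqrt (by positivity)]; ring
  simp only [phi, h, ← mul_assoc]
  rw [mul_right_comm _ (exp _), mul_assoc _ (exp _), ← exp_add]
  ring_nf

lemma hasDerivAt_Phi₀ (x : ℝ) : HasDerivAt Phi₀ (phi x) x :=
  (continuous_phi.integral_hasStrictDerivAt 0 x).hasDerivAt

@[fun_prop] lemma continuous_Phi₀ : Continuous Phi₀ :=
  continuous_iff_continuousAt.2 fun x => (hasDerivAt_Phi₀ x).continuousAt

@[simp] lemma Phi₀_zero : Phi₀ 0 = 0 := intervalIntegral.integral_same

lemma Phi₀_neg (x : ℝ) : Phi₀ (-x) = -Phi₀ x := by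
  have h := intervalIntegral.integral_comp_neg (a := 0) (b := x) phi
  simp only [phi_neg, neg_zero] at h
  rw [Phi₀, Phi₀, h, intervalIntegral.integral_symm]

lemma abs_Phi₀_le_one (x : ℝ) : |Phi₀ x| ≤ 1 := by
  rw [← integral_phi]
  calc |Phi₀ x| ≤ ∫ t in Ι 0 x, ‖phi t‖ :=
        intervalIntegral.norm_integral_le_integral_norm_uIoc (f := phi)
    _ ≤ ∫ t, phi t := by
      simp only [Real.norm_eq_abs, abs_of_nonneg (phi_nonneg _)]
      exact setIntegral_le_integral integrable_phi (.of_forall phi_nonneg)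

lemma tendsto_Phi₀_atTop : Tendsto Phi₀ atTop (𝓝 (1 / 2)) :=
  integral_Ioi_phi ▸ intervalIntegral_tendsto_integral_Ioi 0 integrable_phi.integrableOn tendsto_id

lemma gaussianReal_real_Ioo {u v : ℝ} (huv : u ≤ v) :
    (gaussianReal 0 1).real (Ioo u v) = Phi₀ v - Phi₀ u := by
  rw [measureReal_def, gaussianReal_apply_eq_integral 0 one_ne_zero,
    ENNReal.toReal_ofReal (setIntegral_nonneg measurableSet_Ioo fun t _ =>
      gaussianPDFReal_nonneg 0 1 t),
    gaussianPDFReal_zero_one, ← integral_Ioc_eq_integral_Ioo, ← intervalIntegral.integral_of_le huv]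
  exact (intervalIntegral.integral_interval_sub_left
    integrable_phi.intervalIntegrable integrable_phi.intervalIntegrable).symm

lemma hasDerivAt_phi_comp_mul (k t : ℝ) :
    HasDerivAt (fun t => phi (k * t)) (-(k ^ 2 * t) * phi (k * t)) t := by
  have h := (hasDerivAt_phi (k * t)).comp t ((hasDerivAt_id t).const_mul k)
  exact h.congr_deriv (by simp only [mul_one]; ring)

lemma tendsto_phi_comp_mul_atTop {k : ℝ} (hk : 0 < k) :
    Tendsto (fun t => phi (k * t)) atTop (𝓝 0) :=
  tendsto_phi_atTop.comp (tendsto_id.const_mul_atTop hk)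

lemma hasDerivAt_neg_phi_comp_mul_div_sq {k : ℝ} (hk : k ≠ 0) (t : ℝ) :
    HasDerivAt (fun t => -phi (k * t) / k ^ 2) (t * phi (k * t)) t :=
  ((hasDerivAt_phi_comp_mul k t).neg.div_const _).congr_deriv (by field_simp)

lemma integrableOn_Ioi_mul_phi_comp_mul {k : ℝ} (hk : 0 < k) :
    IntegrableOn (fun t => t * phi (k * t)) (Ioi 0) :=
  integrableOn_Ioi_deriv_of_nonneg' (fun t _ => hasDerivAt_neg_phi_comp_mul_div_sq hk.ne' t)
    (fun t ht => mul_nonneg (le_of_lt ht) (phi_nonneg _))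
    (by simpa using (tendsto_phi_comp_mul_atTop hk).neg.div_const (k ^ 2))

lemma integral_Ioi_mul_phi_comp_mul {k : ℝ} (hk : 0 < k) :
    ∫ t in Ioi 0, t * phi (k * t) = (k ^ 2 * √(2 * π))⁻¹ := by
  rw [integral_Ioi_of_hasDerivAt_of_nonneg'
    (fun t _ => hasDerivAt_neg_phi_comp_mul_div_sq hk.ne' t)
    (fun t ht => mul_nonneg (le_of_lt ht) (phi_nonneg _))
    (by simpa using (tendsto_phi_comp_mul_atTop hk).neg.div_const (k ^ 2))]
  rw [mul_zero, phi_zero]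
  ring

lemma integrableOn_Ioi_mul_phi : IntegrableOn (fun t => t * phi t) (Ioi 0) := by
  simpa using integrableOn_Ioi_mul_phi_comp_mul one_pos

lemma integrable_phi_mul_Phi₀ (c : ℝ) : Integrable (fun t => phi t * Phi₀ (c * t)) :=
  integrable_phi.mul_bdd (by fun_prop : Continuous _).aestronglyMeasurable
    (.of_forall fun _ => abs_Phi₀_le_one _)

lemma integrableOn_mul_phi_mul_Phi₀ (c : ℝ) :
    IntegrableOn (fun t => t * phi t * Phi₀ (c * t)) (Ioi 0) :=
  integrableOn_Ioi_mul_phi.mul_bdd (by fun_prop : Continuous _).aestronglyMeasurable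
    (.of_forall fun _ => abs_Phi₀_le_one _)

lemma integral_Ioi_phi_mul_mul_phi_comp_mul (c : ℝ) :
    ∫ t in Ioi 0, phi t * (t * phi (c * t)) = (2 * π * (1 + c ^ 2))⁻¹ := by
  have hk : 0 < √(1 + c ^ 2) := sqrt_pos.2 (by positivity)
  have h : ∀ t, phi t * (t * phi (c * t)) = (√(2 * π))⁻¹ * (t * phi (√(1 + c ^ 2) * t)) := by
    intro t
    rw [mul_left_comm, phi_mul_phi]
    ring
  simp_rw [h, integral_const_mul, integral_Ioi_mul_phi_comp_mul hk,
    sq_sqrt (by positivity : (0:ℝ) ≤ 1 + c ^ 2)]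
  rw [← mul_inv, mul_left_comm, mul_self_sqrt (by positivity), mul_comm]

lemma hasDerivAt_Phi₀_mul_const (t x : ℝ) :
    HasDerivAt (fun x => Phi₀ (x * t)) (t * phi (x * t)) x := by
  exact ((hasDerivAt_Phi₀ (x * t)).comp x ((hasDerivAt_id x).mul_const t)).congr_deriv
    (by rw [one_mul, mul_comm])

lemma hasDerivAt_integral_Ioi_phi_mul_Phi₀ (c : ℝ) :
    HasDerivAt (fun c => ∫ t in Ioi 0, phi t * Phi₀ (c * t)) (2 * π * (1 + c ^ 2))⁻¹ c := by
  have h := hasDerivAt_integral_of_dominated_loc_of_deriv_le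
    (μ := volume.restrict (Ioi 0)) (F := fun c t => phi t * Phi₀ (c * t))
    (F' := fun c t => phi t * (t * phi (c * t)))
    (bound := fun t => phi 0 * (t * phi t)) (Metric.ball_mem_nhds c one_pos)
    (.of_forall fun _ => (by fun_prop : Continuous _).aestronglyMeasurable)
    (integrable_phi_mul_Phi₀ c).integrableOn
    (by fun_prop : Continuous _).aestronglyMeasurable ?_ ?_ ?_
  · exact integral_Ioi_phi_mul_mul_phi_comp_mul c ▸ h.2
  · filter_upwards [ae_restrict_mem measurableSet_Ioi] with t (ht : 0 < t) x _
    rw [norm_mul, norm_mul, Real.norm_of_nonneg (phi_nonneg _), Real.norm_of_nonneg ht.le,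
      Real.norm_of_nonneg (phi_nonneg _)]
    have := mul_le_mul_of_nonneg_left (phi_le_phi_zero (x * t)) (mul_nonneg ht.le (phi_nonneg t))
    linarith
  · exact integrableOn_Ioi_mul_phi.const_mul _
  · exact .of_forall fun t x _ => hasDerivAt_Phi₀_mul_const t x |>.const_mul (phi t)

lemma integral_Ioi_phi_mul_Phi₀ (c : ℝ) :
    ∫ t in Ioi 0, phi t * Phi₀ (c * t) = arctan c / (2 * π) := by
  have hderiv : ∀ x, HasDerivAt
      (fun c => (∫ t in Ioi 0, phi t * Phi₀ (c * t)) - arctan c / (2 * π)) 0 x := fun x =>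
    ((hasDerivAt_integral_Ioi_phi_mul_Phi₀ x).sub ((hasDerivAt_arctan x).div_const _)).congr_deriv
      (by field_simp; ring)
  have h := is_const_of_deriv_eq_zero (fun x => (hderiv x).differentiableAt)
    (fun x => (hderiv x).deriv) c 0
  simpa [sub_eq_zero] using h

lemma integral_Ioi_mul_phi_mul_Phi₀ (c : ℝ) :
    ∫ t in Ioi 0, t * phi t * Phi₀ (c * t) = c / (2 * √(2 * π) * √(1 + c ^ 2)) := by
  set k := √(1 + c ^ 2)
  have hk : 0 < k := sqrt_pos.2 (by positivity)
  have hderiv : ∀ t ∈ Ici (0 : ℝ), HasDerivAt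
      (fun t => c / (√(2 * π) * k) * Phi₀ (k * t) - phi t * Phi₀ (c * t))
      (t * phi t * Phi₀ (c * t)) t := by
    intro t _
    have hΦ : ∀ a, HasDerivAt (fun t => Phi₀ (a * t)) (phi (a * t) * a) t := fun a =>
      (hasDerivAt_Phi₀ (a * t)).comp t ((hasDerivAt_id t).const_mul a) |>.congr_deriv
        (by simp)
    refine (((hΦ k).const_mul _).sub ((hasDerivAt_phi t).mul (hΦ c))).congr_deriv ?_
    have hφ : phi t * phi (c * t) = (√(2 * π))⁻¹ * phi (k * t) := phi_mul_phi c t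
    have h2π : √(2 * π) ≠ 0 := (sqrt_pos.2 (by positivity)).ne'
    rw [show phi t * (phi (c * t) * c) = c * (phi t * phi (c * t)) by ring, hφ]
    field_simp
    ring
  have hlim : Tendsto (fun t => c / (√(2 * π) * k) * Phi₀ (k * t) - phi t * Phi₀ (c * t))
      atTop (𝓝 (c / (√(2 * π) * k) * (1 / 2) - 0)) := by
    refine ((tendsto_Phi₀_atTop.comp (tendsto_id.const_mul_atTop hk)).const_mul _).sub ?_
    refine squeeze_zero_norm (fun t => ?_) tendsto_phi_atTop
    rw [norm_mul, Real.norm_of_nonneg (phi_nonneg t)]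
    exact mul_le_of_le_one_right (phi_nonneg t) (abs_Phi₀_le_one _)
  rw [integral_Ioi_of_hasDerivAt_of_tendsto' hderiv (integrableOn_mul_phi_mul_Phi₀ c) hlim]
  simp only [mul_zero, Phi₀_zero]
  ring

/-- The event `|Y| < |X|` on the sample space of `(Z₁, Z₂)`. -/
def absLtEvent (σx σy ρ s : ℝ) : Set (ℝ × ℝ) := {z | |σy * (ρ * z.1 + s * z.2)| < |σx * z.1|}

section Event

variable {σx σy ρ s : ℝ}

lemma measurableSet_absLtEvent : MeasurableSet (absLtEvent σx σy ρ s) :=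
  measurableSet_lt (by fun_prop) (by fun_prop)

lemma preimage_mk_absLtEvent (hσx : 0 < σx) (hσy : 0 < σy) (hs : 0 < s) (x : ℝ) :
    Prod.mk x ⁻¹' absLtEvent σx σy ρ s
      = Ioo ((-(σx / σy * |x|) - ρ * x) / s) ((σx / σy * |x| - ρ * x) / s) := by
  ext y
  have hx : |σx * x| = σy * (σx / σy * |x|) := by
    rw [abs_mul, abs_of_pos hσx]; field_simp
  change |σy * (ρ * x + s * y)| < |σx * x| ↔ _
  rw [hx, abs_mul, abs_of_pos hσy, mul_lt_mul_iff_right₀ hσy, abs_lt, mem_Ioo, div_lt_iff₀ hs,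
    lt_div_iff₀ hs]
  constructor <;> rintro ⟨h₁, h₂⟩ <;> constructor <;> linarith

lemma gaussianReal_real_preimage_mk_absLtEvent (hσx : 0 < σx) (hσy : 0 < σy) (hs : 0 < s)
    (x : ℝ) :
    (gaussianReal 0 1).real (Prod.mk x ⁻¹' absLtEvent σx σy ρ s)
      = Phi₀ ((σx / σy - ρ) / s * |x|) + Phi₀ ((σx / σy + ρ) / s * |x|) := by
  rw [preimage_mk_absLtEvent hσx hσy hs, gaussianReal_real_Ioo, sub_eq_add_neg, ← Phi₀_neg]
  · rcases le_or_gt 0 x with hx | hx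
    · rw [abs_of_nonneg hx]; ring_nf
    · rw [abs_of_neg hx, add_comm]; ring_nf
  · have : 0 ≤ σx / σy * |x| := by positivity
    gcongr; linarith

lemma setIntegral_absLtEvent_comp_abs_fst (hσx : 0 < σx) (hσy : 0 < σy) (hs : 0 < s)
    {f : ℝ → ℝ} (hf : Integrable (fun x => f |x|) (gaussianReal 0 1)) :
    ∫ z in absLtEvent σx σy ρ s, f |z.1| ∂(gaussianReal 0 1).prod (gaussianReal 0 1)
      = 2 * ∫ t in Ioi 0,
          phi t * ((Phi₀ ((σx / σy - ρ) / s * t) + Phi₀ ((σx / σy + ρ) / s * t)) * f t) := by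
  rw [setIntegral_prod_comp_fst measurableSet_absLtEvent hf]
  simp_rw [gaussianReal_real_preimage_mk_absLtEvent hσx hσy hs, smul_eq_mul]
  exact integral_gaussianReal_comp_abs
    (fun t => (Phi₀ ((σx / σy - ρ) / s * t) + Phi₀ ((σx / σy + ρ) / s * t)) * f t)

lemma measureReal_absLtEvent (hσx : 0 < σx) (hσy : 0 < σy) (hs : 0 < s) :
    ((gaussianReal 0 1).prod (gaussianReal 0 1)).real (absLtEvent σx σy ρ s)
      = (arctan ((σx / σy - ρ) / s) + arctan ((σx / σy + ρ) / s)) / π := by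
  have h := setIntegral_absLtEvent_comp_abs_fst hσx hσy hs (ρ := ρ) (f := fun _ => 1)
    (integrable_const 1)
  rw [setIntegral_const, smul_eq_mul, mul_one] at h
  simp_rw [h, mul_one, mul_add]
  rw [integral_add (integrable_phi_mul_Phi₀ _).integrableOn (integrable_phi_mul_Phi₀ _).integrableOn,
    integral_Ioi_phi_mul_Phi₀, integral_Ioi_phi_mul_Phi₀]
  field_simp

lemma setIntegral_absLtEvent_abs_fst (hσx : 0 < σx) (hσy : 0 < σy) (hs : 0 < s) :
    ∫ z in absLtEvent σx σy ρ s, |σx * z.1| ∂(gaussianReal 0 1).prod (gaussianReal 0 1)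
      = σx * ((σx / σy - ρ) / s / √(1 + ((σx / σy - ρ) / s) ^ 2)
          + (σx / σy + ρ) / s / √(1 + ((σx / σy + ρ) / s) ^ 2)) / √(2 * π) := by
  simp_rw [abs_mul, abs_of_pos hσx]
  rw [setIntegral_absLtEvent_comp_abs_fst hσx hσy hs (f := fun t => σx * t)
    (((memLp_id_gaussianReal 1).integrable le_rfl).abs.const_mul σx)]
  have h : ∀ a b t : ℝ, phi t * ((Phi₀ (a * t) + Phi₀ (b * t)) * (σx * t))
      = σx * (t * phi t * Phi₀ (a * t) + t * phi t * Phi₀ (b * t)) := fun _ _ _ => by ring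
  simp_rw [h]
  rw [integral_const_mul, integral_add (integrableOn_mul_phi_mul_Phi₀ _)
    (integrableOn_mul_phi_mul_Phi₀ _), integral_Ioi_mul_phi_mul_Phi₀, integral_Ioi_mul_phi_mul_Phi₀]
  field_simp

end Event

end StdGaussian

end

open StdGaussian in
/-- For a centered bivariate normal pair `(X, Y)` with variances `σ_x², σ_y²` and
correlation `ρ ∈ (−1,1)` (realized via independent standard normals `Z₁, Z₂`), with
`r = σ_x/σ_y`, the conditional expectation `E[|X| · 1{|X|>|Y|}] / Pr(|X|>|Y|)` equals
`σ_x·√(π/2)·[(r−ρ)/√(1+r²−2rρ) + (r+ρ)/√(1+r²+2rρ)]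
  / [arctan((r−ρ)/√(1−ρ²)) + arctan((r+ρ)/√(1−ρ²))]`. -/
theorem bivariate_normal_conditional_expectation (σx σy ρ : ℝ)
    (hσx : 0 < σx) (hσy : 0 < σy) (hρ : ρ ∈ Set.Ioo (-1 : ℝ) 1) :
    (∫ z in {z : ℝ × ℝ |
          |σy * (ρ * z.1 + Real.sqrt (1 - ρ ^ 2) * z.2)| < |σx * z.1|},
        |σx * z.1| ∂(Measure.prod (gaussianReal 0 1) (gaussianReal 0 1)))
      / ((Measure.prod (gaussianReal 0 1) (gaussianReal 0 1))
          {z : ℝ × ℝ |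
            |σy * (ρ * z.1 + Real.sqrt (1 - ρ ^ 2) * z.2)| < |σx * z.1|}).toReal
      = σx * Real.sqrt (π / 2)
          * ((σx / σy - ρ) / Real.sqrt (1 + (σx / σy) ^ 2 - 2 * (σx / σy) * ρ)
              + (σx / σy + ρ) / Real.sqrt (1 + (σx / σy) ^ 2 + 2 * (σx / σy) * ρ))
          / (Real.arctan ((σx / σy - ρ) / Real.sqrt (1 - ρ ^ 2))
              + Real.arctan ((σx / σy + ρ) / Real.sqrt (1 - ρ ^ 2))) := by
  have hρ₂ : ρ ^ 2 < 1 := by nlinarith [hρ.1, hρ.2]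
  have hs : 0 < √(1 - ρ ^ 2) := sqrt_pos.2 (by linarith)
  have hs₂ : √(1 - ρ ^ 2) ^ 2 = 1 - ρ ^ 2 := sq_sqrt (by linarith)
  rw [← measureReal_def]
  change (∫ z in absLtEvent σx σy ρ √(1 - ρ ^ 2), _ ∂_) / (_ : Measure (ℝ × ℝ)).real
    (absLtEvent σx σy ρ √(1 - ρ ^ 2)) = _
  rw [setIntegral_absLtEvent_abs_fst hσx hσy hs, measureReal_absLtEvent hσx hσy hs,
    div_div_sqrt_one_add_sq_div hs, div_div_sqrt_one_add_sq_div hs, hs₂,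
    show 1 - ρ ^ 2 + (σx / σy - ρ) ^ 2 = 1 + (σx / σy) ^ 2 - 2 * (σx / σy) * ρ by ring,
    show 1 - ρ ^ 2 + (σx / σy + ρ) ^ 2 = 1 + (σx / σy) ^ 2 + 2 * (σx / σy) * ρ by ring]
  have hπ : √(π / 2) = π / √(2 * π) := by
    rw [eq_div_iff (sqrt_pos.2 (by positivity)).ne', ← sqrt_mul (by positivity),
      show π / 2 * (2 * π) = π ^ 2 by ring, sqrt_sq pi_pos.le]
  rw [hπ, div_div_eq_mul_div]
  ring
end

section
/- Let Z₁, Z₂ be independent standard normal random variables, let σ_x, σ_y > 0 and ρ ∈ (−1,1), and set X = σ_x·Z₁ and Y = σ_y·(ρ·Z₁ + √(1−ρ²)·Z₂). Then for every t > 0, Pr( |X| > t and |X| > |Y| ) ≤ exp( −t²/(2σ_x²) ) · Pr( |X| > |Y| ); equivalently, the conditional tail probability Pr(|X| > t | |X| > |Y|) is at most exp(−t²/(2σ_x²)). -/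
open MeasureTheory ProbabilityTheory Real Set Filter Topology
open scoped ENNReal

/-! In polar coordinates the standard Gaussian measure on `ℝ²` is the product of the radial law
with density `r e^{-r²/2}`, whose tail is `P(R ≥ u) = e^{-u²/2}`, and the uniform law of the angle.
The event `|Y| < |X|` is a cone: it depends only on the angle of `(Z₁, Z₂)`, so it is independent of
the radius, while `t < |X| = σ_x |Z₁|` forces `R ≥ t / σ_x`. -/

lemma gaussianReal_prod_gaussianReal :
    (gaussianReal 0 1).prod (gaussianReal 0 1) =
      volume.withDensity fun z : ℝ × ℝ ↦
        ENNReal.ofReal ((2 * π)⁻¹ * exp (-(z.1 ^ 2 + z.2 ^ 2) / 2)) := by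
  rw [gaussianReal_of_var_ne_zero 0 one_ne_zero,
    prod_withDensity (measurable_gaussianPDF 0 1) (measurable_gaussianPDF 0 1),
    ← Measure.volume_eq_prod]
  congr 1
  funext z
  rw [gaussianPDF, gaussianPDF, ← ENNReal.ofReal_mul (gaussianPDFReal_nonneg _ _ _)]
  congr 1
  have h2π : 0 ≤ 2 * π := by positivity
  simp only [gaussianPDFReal, NNReal.coe_one, mul_one, sub_zero]
  rw [mul_mul_mul_comm, ← exp_add, ← mul_inv, mul_self_sqrt h2π]
  congr 2
  ring

lemma lintegral_Ici_mul_exp_neg_sq_div_two {u : ℝ} (hu : 0 ≤ u) :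
    ∫⁻ r in Ici u, ENNReal.ofReal (r * exp (-r ^ 2 / 2)) = ENNReal.ofReal (exp (-u ^ 2 / 2)) := by
  have hderiv : ∀ r ∈ Ici u,
      HasDerivAt (fun r ↦ -exp (-r ^ 2 / 2)) (r * exp (-r ^ 2 / 2)) r := fun r _ ↦ by
    refine ((hasDerivAt_pow 2 r).neg.div_const 2).exp.neg.congr_deriv ?_
    simp only [Pi.neg_apply]
    ring
  have hnonneg : ∀ r ∈ Ioi u, 0 ≤ r * exp (-r ^ 2 / 2) := fun r hr ↦
    mul_nonneg (hu.trans hr.out.le) (exp_pos _).le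
  have hlim : Tendsto (fun r : ℝ ↦ -exp (-r ^ 2 / 2)) atTop (𝓝 (-0)) :=
    (tendsto_exp_atBot.comp <| (tendsto_neg_atTop_atBot.comp
      (tendsto_pow_atTop two_ne_zero)).atBot_div_const two_pos).neg
  rw [← restrict_Ioi_eq_restrict_Ici, ← ofReal_integral_eq_lintegral_ofReal
    (integrableOn_Ioi_deriv_of_nonneg' hderiv hnonneg hlim)
    ((ae_restrict_iff' measurableSet_Ioi).2 (.of_forall hnonneg)),
    integral_Ioi_of_hasDerivAt_of_nonneg' hderiv hnonneg hlim]
  simp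

lemma gaussianReal_prod_tail_inter_cone_eq_lintegral_angle {C : Set (ℝ × ℝ)} (hC : MeasurableSet C)
    (hcone : ∀ r : ℝ, 0 < r → ∀ z, r • z ∈ C ↔ z ∈ C) {u : ℝ} (hu : 0 ≤ u) :
    (gaussianReal 0 1).prod (gaussianReal 0 1) ({z | u ^ 2 ≤ z.1 ^ 2 + z.2 ^ 2} ∩ C) =
      ENNReal.ofReal (exp (-u ^ 2 / 2)) *
        ∫⁻ θ in Ioo (-π) π, C.indicator (fun _ ↦ ENNReal.ofReal (2 * π)⁻¹) (cos θ, sin θ) := by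
  set S := {z : ℝ × ℝ | u ^ 2 ≤ z.1 ^ 2 + z.2 ^ 2} ∩ C
  set f : ℝ → ℝ≥0∞ := (Ici u).indicator fun r ↦ ENNReal.ofReal (r * exp (-r ^ 2 / 2))
  set g : ℝ → ℝ≥0∞ := fun θ ↦ C.indicator (fun _ ↦ ENNReal.ofReal (2 * π)⁻¹) (cos θ, sin θ)
  have hS : MeasurableSet S := (measurableSet_le measurable_const (by fun_prop)).inter hC
  -- the cone condition only sees the angle, so the integrand splits into radial times angular
  have hpolar : ∀ p ∈ polarCoord.target, ENNReal.ofReal p.1 • S.indicator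
      (fun z ↦ ENNReal.ofReal ((2 * π)⁻¹ * exp (-(z.1 ^ 2 + z.2 ^ 2) / 2)))
      (polarCoord.symm p) = f p.1 * g p.2 := by
    rintro ⟨r, θ⟩ ⟨hr, -⟩
    have hr : 0 < r := hr
    have hsymm : polarCoord.symm (r, θ) = r • (cos θ, sin θ) := by simp [Prod.smul_mk]
    have hnorm : (r • (cos θ, sin θ)).1 ^ 2 + (r • (cos θ, sin θ)).2 ^ 2 = r ^ 2 := by
      simp only [Prod.smul_fst, Prod.smul_snd, smul_eq_mul]
      linear_combination r ^ 2 * sin_sq_add_cos_sq θ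
    have hmem : r • (cos θ, sin θ) ∈ S ↔ u ≤ r ∧ (cos θ, sin θ) ∈ C := by
      rw [← hcone r hr, ← pow_le_pow_iff_left₀ hu hr.le two_ne_zero, ← hnorm]
      rfl
    classical
    simp only [hsymm, indicator_apply, hmem, hnorm, f, g, mem_Ici]
    by_cases hθ : (cos θ, sin θ) ∈ C
    · by_cases hur : u ≤ r
      · simp only [hθ, hur, and_self, if_true, smul_eq_mul]
        rw [← ENNReal.ofReal_mul hr.le, ← ENNReal.ofReal_mul (by positivity)]
        ring_nf
      · simp [hur]
    · simp [hθ]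
  have hf : f.support ⊆ Ioi 0 := fun r hr ↦ by
    have : ENNReal.ofReal (r * exp (-r ^ 2 / 2)) ≠ 0 := fun h ↦ hr (by simp [f, indicator_apply, h])
    exact (mul_pos_iff_of_pos_right (exp_pos _)).1 (ENNReal.ofReal_ne_zero_iff.1 this)
  rw [gaussianReal_prod_gaussianReal, withDensity_apply _ hS, ← lintegral_indicator hS,
    ← lintegral_comp_polarCoord_symm,
    setLIntegral_congr_fun polarCoord.open_target.measurableSet hpolar,
    polarCoord_target, Measure.volume_eq_prod, ← Measure.prod_restrict,
    lintegral_prod_mul ((Measurable.indicator (by fun_prop) measurableSet_Ici).aemeasurable)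
      (by fun_prop), setLIntegral_eq_of_support_subset hf,
    lintegral_indicator measurableSet_Ici, lintegral_Ici_mul_exp_neg_sq_div_two hu]

lemma gaussianReal_prod_tail_inter_cone {C : Set (ℝ × ℝ)} (hC : MeasurableSet C)
    (hcone : ∀ r : ℝ, 0 < r → ∀ z, r • z ∈ C ↔ z ∈ C) {u : ℝ} (hu : 0 ≤ u) :
    (gaussianReal 0 1).prod (gaussianReal 0 1) ({z | u ^ 2 ≤ z.1 ^ 2 + z.2 ^ 2} ∩ C) =
      ENNReal.ofReal (exp (-u ^ 2 / 2)) * (gaussianReal 0 1).prod (gaussianReal 0 1) C := by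
  have hcone_measure := gaussianReal_prod_tail_inter_cone_eq_lintegral_angle hC hcone le_rfl
  rw [inter_eq_right.2 fun z _ ↦ by rw [mem_ofPred_eq, zero_pow two_ne_zero]; positivity]
    at hcone_measure
  rw [gaussianReal_prod_tail_inter_cone_eq_lintegral_angle hC hcone hu, hcone_measure]
  simp

theorem bivariate_normal_conditional_tail_general (σx σy ρ t : ℝ)
    (hσx : 0 < σx) (ht : 0 < t) :
    (Measure.prod (gaussianReal 0 1) (gaussianReal 0 1))
      ({z : ℝ × ℝ | t < |σx * z.1|}
        ∩ {z : ℝ × ℝ |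
            |σy * (ρ * z.1 + Real.sqrt (1 - ρ ^ 2) * z.2)| < |σx * z.1|})
      ≤ ENNReal.ofReal (Real.exp (-(t ^ 2) / (2 * σx ^ 2)))
          * (Measure.prod (gaussianReal 0 1) (gaussianReal 0 1))
            {z : ℝ × ℝ |
              |σy * (ρ * z.1 + Real.sqrt (1 - ρ ^ 2) * z.2)| < |σx * z.1|} := by
  set C := {z : ℝ × ℝ | |σy * (ρ * z.1 + √(1 - ρ ^ 2) * z.2)| < |σx * z.1|}
  have hC : MeasurableSet C := measurableSet_lt (by fun_prop) (by fun_prop)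
  have hcone : ∀ r : ℝ, 0 < r → ∀ z, r • z ∈ C ↔ z ∈ C := fun r hr z ↦ by
    simp only [C, mem_ofPred_eq, Prod.smul_fst, Prod.smul_snd, smul_eq_mul]
    rw [show σy * (ρ * (r * z.1) + √(1 - ρ ^ 2) * (r * z.2))
        = r * (σy * (ρ * z.1 + √(1 - ρ ^ 2) * z.2)) by ring,
      show σx * (r * z.1) = r * (σx * z.1) by ring, abs_mul r, abs_mul r, abs_of_pos hr,
      mul_lt_mul_iff_right₀ hr]
  have htail : {z : ℝ × ℝ | t < |σx * z.1|} ⊆ {z | (t / σx) ^ 2 ≤ z.1 ^ 2 + z.2 ^ 2} := by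
    intro z hz
    have hz1 : t / σx < |z.1| := by
      rwa [div_lt_iff₀ hσx, mul_comm, ← abs_of_pos hσx, ← abs_mul]
    have := pow_lt_pow_left₀ hz1 (div_pos ht hσx).le two_ne_zero
    rw [sq_abs] at this
    exact this.le.trans (le_add_of_nonneg_right (sq_nonneg z.2))
  calc _ ≤ _ := measure_mono (inter_subset_inter_left C htail)
    _ = _ := by
      rw [gaussianReal_prod_tail_inter_cone hC hcone (by positivity)]
      congr 3
      field_simp

/-- For a centered bivariate normal pair `(X, Y)` with variances `σ_x², σ_y²` and
correlation `ρ ∈ (−1,1)` (realized via independent standard normals `Z₁, Z₂`), for every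
`t > 0`: `Pr(|X| > t and |X| > |Y|) ≤ exp(−t²/(2σ_x²)) · Pr(|X| > |Y|)`, i.e. the
conditional tail probability `Pr(|X| > t | |X| > |Y|)` is at most `exp(−t²/(2σ_x²))`. -/
theorem bivariate_normal_conditional_tail (σx σy ρ t : ℝ)
    (hσx : 0 < σx) (hσy : 0 < σy) (hρ : ρ ∈ Set.Ioo (-1 : ℝ) 1) (ht : 0 < t) :
    (Measure.prod (gaussianReal 0 1) (gaussianReal 0 1))
      ({z : ℝ × ℝ | t < |σx * z.1|}
        ∩ {z : ℝ × ℝ |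
            |σy * (ρ * z.1 + Real.sqrt (1 - ρ ^ 2) * z.2)| < |σx * z.1|})
      ≤ ENNReal.ofReal (Real.exp (-(t ^ 2) / (2 * σx ^ 2)))
          * (Measure.prod (gaussianReal 0 1) (gaussianReal 0 1))
            {z : ℝ × ℝ |
              |σy * (ρ * z.1 + Real.sqrt (1 - ρ ^ 2) * z.2)| < |σx * z.1|} :=
  bivariate_normal_conditional_tail_general σx σy ρ t hσx ht
end

section
/- Fix a positive integer k, ε > 0, β > 0, and a matrix W ∈ ℝ^{p×k} whose every column has at least one nonzero entry. Let u, u′ ∈ [−1,1]^p be β-adjacent and suppose that (Wᵀu)_j ≠ 0 and (Wᵀu′)_j ≠ 0 for all j = 1,…,k. For each j define L_j = ⌈ |(Wᵀu)_j| / (β·max_{1≤i≤p} |W_{ij}|) ⌉ and L′_j = ⌈ |(Wᵀu′)_j| / (β·max_{1≤i≤p} |W_{ij}|) ⌉. Let s̃ ∈ {−1,1}^k be generated by independently setting s̃_j = sign((Wᵀu)_j) with probability e^{L_j·ε/k}/(e^{L_j·ε/k}+1) and s̃_j = −sign((Wᵀu)_j) otherwise; let s̃′ be generated analogously from u′ using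 the L′_j. Then for every y ∈ {−1,1}^k, Pr(s̃ = y) ≤ e^ε · Pr(s̃′ = y). -/
open MeasureTheory ProbabilityTheory Real

/-- Two vectors `u, u' ∈ ℝᵖ` are `β`-adjacent if they differ in exactly one
coordinate `i` and `|u i − u' i| ≤ β`. -/
def Adjacent {p : ℕ} (β : ℝ) (u u' : Fin p → ℝ) : Prop :=
  ∃ i₀ : Fin p, u i₀ ≠ u' i₀ ∧ |u i₀ - u' i₀| ≤ β ∧ ∀ i : Fin p, i ≠ i₀ → u i = u' i

/-- The sign function: `+1` for `t ≥ 0` and `−1` for `t < 0`. -/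
noncomputable def psign (t : ℝ) : ℝ := if 0 ≤ t then 1 else -1

/-- The uniform distribution on `[0,1]`, used to drive the random sign flips. -/
noncomputable def uniform01 : Measure ℝ := volume.restrict (Set.Icc (0 : ℝ) 1)

instance : IsProbabilityMeasure uniform01 :=
  ⟨by rw [uniform01, Measure.restrict_apply_univ, Real.volume_Icc]; norm_num⟩

/-- The smooth level `L_j = ⌈|(Wᵀu)_j| / (β·max_i |W i j|)⌉` for the `j`-th projection. -/
noncomputable def smoothLevel {p k : ℕ} (β : ℝ) (W : Fin p → Fin k → ℝ)
    (u : Fin p → ℝ) (j : Fin k) : ℤ :=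
  ⌈|∑ i : Fin p, W i j * u i| / (β * ⨆ i : Fin p, |W i j|)⌉

/-- The DP-SignRP-RR-smooth output: for each `j`, keep `sign((Wᵀu)_j)` with the smooth
flipping probability `e^{L_j ε/k}/(e^{L_j ε/k}+1)` and flip it otherwise, driven by the
uniform randomness `r j`. -/
noncomputable def signRPSmooth {p k : ℕ} (β ε : ℝ) (W : Fin p → Fin k → ℝ)
    (u : Fin p → ℝ) (r : Fin k → ℝ) (j : Fin k) : ℝ :=
  if r j ≤ Real.exp ((smoothLevel β W u j : ℝ) * ε / k)
        / (Real.exp ((smoothLevel β W u j : ℝ) * ε / k) + 1)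
    then psign (∑ i : Fin p, W i j * u i)
    else -psign (∑ i : Fin p, W i j * u i)

/-!
Over the independent coordinates both probabilities factor into randomized-response
probabilities `sigmoid (±L_j ε / k)`, so it suffices to bound the ratio of each factor by
`e^{ε/k}`. Adjacency moves `(Wᵀu)_j` by at most `β · max_i |W i j|`, so `|L_j - L'_j| ≤ 1`, and
`sigmoid z ≤ e^δ · sigmoid z'` whenever `z ≤ z' + δ`. When the two signs differ, the projections
lie on opposite sides of `0` within that distance, which forces `L_j, L'_j ≤ 1`; the ratio is then
at most `sigmoid (ε/k) / sigmoid (-ε/k) = e^{ε/k}`.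
-/

lemma exp_div_exp_add_one_eq_sigmoid (z : ℝ) : exp z / (exp z + 1) = sigmoid z := by
  rw [sigmoid_def, exp_neg]
  field_simp

lemma sigmoid_le_exp_mul_sigmoid {z z' δ : ℝ} (hδ : 0 ≤ δ) (h : z ≤ z' + δ) :
    sigmoid z ≤ exp δ * sigmoid z' := by
  have hexp : exp (-z') ≤ exp δ * exp (-z) := by
    rw [← exp_add]; exact exp_le_exp.mpr (by linarith)
  rw [sigmoid_def, sigmoid_def, ← one_div, ← one_div, mul_one_div,
    div_le_div_iff₀ (by positivity) (by positivity)]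
  nlinarith [one_le_exp hδ]

lemma sigmoid_eq_exp_mul_sigmoid_neg (z : ℝ) : sigmoid z = exp z * sigmoid (-z) := by
  rw [← sigmoid_mul_rexp_neg, mul_left_comm, ← exp_add, add_neg_cancel, exp_zero, mul_one]

lemma uniform01_Iic {t : ℝ} (ht : t ≤ 1) : uniform01 (Set.Iic t) = ENNReal.ofReal t := by
  have hset : Set.Iic t ∩ Set.Icc 0 1 = Set.Icc 0 t := by
    ext; simp only [Set.mem_inter_iff, Set.mem_Iic, Set.mem_Icc]; grind
  rw [uniform01, Measure.restrict_apply measurableSet_Iic, hset, volume_Icc, sub_zero]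

lemma uniform01_Ioi {t : ℝ} (ht : 0 ≤ t) : uniform01 (Set.Ioi t) = ENNReal.ofReal (1 - t) := by
  have hset : Set.Ioi t ∩ Set.Icc 0 1 = Set.Ioc t 1 := by
    ext; simp only [Set.mem_inter_iff, Set.mem_Ioi, Set.mem_Icc, Set.mem_Ioc]; grind
  rw [uniform01, Measure.restrict_apply measurableSet_Ioi, hset, volume_Ioc]

lemma psign_ne_zero (t : ℝ) : psign t ≠ 0 := by
  unfold psign; split_ifs <;> norm_num

lemma eq_psign_or_eq_neg_psign {y : ℝ} (hy : y = 1 ∨ y = -1) (t : ℝ) :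
    y = psign t ∨ y = -psign t := by
  unfold psign; split_ifs <;> rcases hy with rfl | rfl <;> norm_num

lemma abs_le_abs_sub_of_psign_ne {x x' : ℝ} (h : psign x ≠ psign x') : |x| ≤ |x - x'| := by
  unfold psign at h
  split_ifs at h <;> first
    | exact absurd rfl h
    | rcases abs_cases x with ⟨_, _⟩ | ⟨_, _⟩ <;>
        rcases abs_cases (x - x') with ⟨_, _⟩ | ⟨_, _⟩ <;> linarith

/-- `sigmoid z = e^z / (e^z + 1)` is the probability of keeping the true sign `s`. -/
noncomputable def randomizedResponseProb (z s y : ℝ) : ℝ :=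
  if y = s then sigmoid z else sigmoid (-z)

lemma uniform01_randomizedResponse {z s y : ℝ} (hs : s ≠ 0) (hy : y = s ∨ y = -s) :
    uniform01 {t | (if t ≤ sigmoid z then s else -s) = y}
      = ENNReal.ofReal (randomizedResponseProb z s y) := by
  have hs' : -s ≠ s := fun h => hs (by linarith)
  rcases hy with rfl | rfl
  · have hset : {t | (if t ≤ sigmoid z then y else -y) = y} = Set.Iic (sigmoid z) := by
      ext t; simp [hs']
    rw [hset, uniform01_Iic (sigmoid_le_one z), randomizedResponseProb, if_pos rfl]
  · have hset : {t | (if t ≤ sigmoid z then s else -s) = -s} = Set.Ioi (sigmoid z) := by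
      ext t; simp [hs'.symm]
    rw [hset, uniform01_Ioi (sigmoid_nonneg z), randomizedResponseProb, if_neg hs', sigmoid_neg]

lemma measure_signRPSmooth_eq {p k : ℕ} (β ε : ℝ) (W : Fin p → Fin k → ℝ) (u : Fin p → ℝ)
    {y : Fin k → ℝ} (hy : ∀ j, y j = 1 ∨ y j = -1) :
    Measure.pi (fun _ : Fin k => uniform01) {r | ∀ j, signRPSmooth β ε W u r j = y j}
      = ∏ j, ENNReal.ofReal (randomizedResponseProb (smoothLevel β W u j * ε / k)
          (psign (∑ i, W i j * u i)) (y j)) := by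
  have hset : {r | ∀ j, signRPSmooth β ε W u r j = y j} = Set.univ.pi fun j =>
      {t | (if t ≤ sigmoid (smoothLevel β W u j * ε / k) then psign (∑ i, W i j * u i)
        else -psign (∑ i, W i j * u i)) = y j} := by
    ext r; simp [signRPSmooth, exp_div_exp_add_one_eq_sigmoid]
  rw [hset, Measure.pi_pi]
  exact Finset.prod_congr rfl fun j _ =>
    uniform01_randomizedResponse (psign_ne_zero _) (eq_psign_or_eq_neg_psign (hy j) _)

lemma randomizedResponseProb_le_exp_mul {L L' δ s s' y : ℝ} (hδ : 0 ≤ δ)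
    (hL : 0 ≤ L) (hL' : 0 ≤ L') (hLL' : L ≤ L' + 1) (hL'L : L' ≤ L + 1)
    (hmixed : s ≠ s' → L ≤ 1 ∧ L' ≤ 1) :
    randomizedResponseProb (L * δ) s y ≤ exp δ * randomizedResponseProb (L' * δ) s' y := by
  have h₁ := mul_le_mul_of_nonneg_right hLL' hδ
  have h₂ := mul_le_mul_of_nonneg_right hL'L hδ
  have hLδ := mul_nonneg hL hδ
  have hL'δ := mul_nonneg hL' hδ
  unfold randomizedResponseProb
  split_ifs with hs hs'
  · exact sigmoid_le_exp_mul_sigmoid hδ (by linarith)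
  · obtain ⟨hL₁, hL'₁⟩ := hmixed fun h => hs' (hs.trans h)
    calc sigmoid (L * δ) ≤ sigmoid δ := sigmoid_le (mul_le_of_le_one_left hδ hL₁)
      _ = exp δ * sigmoid (-δ) := sigmoid_eq_exp_mul_sigmoid_neg δ
      _ ≤ exp δ * sigmoid (-(L' * δ)) := by
        gcongr; exact mul_le_of_le_one_left hδ hL'₁
  · exact sigmoid_le_exp_mul_sigmoid hδ (by linarith)
  · exact sigmoid_le_exp_mul_sigmoid hδ (by linarith)

lemma ceil_abs_div_le_ceil_abs_div_add_one {x x' c : ℝ} (hc : 0 ≤ c) (h : |x - x'| ≤ c) :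
    ⌈|x| / c⌉ ≤ ⌈|x'| / c⌉ + 1 := by
  rw [← Int.ceil_add_one]
  apply Int.ceil_mono
  calc |x| / c ≤ (|x'| + c) / c :=
        div_le_div_of_nonneg_right (by linarith [abs_sub_abs_le_abs_sub x x']) hc
    _ = |x'| / c + c / c := add_div _ _ _
    _ ≤ |x'| / c + 1 := by grw [div_self_le_one c]

lemma ceil_div_le_one {a c : ℝ} (hc : 0 ≤ c) (h : a ≤ c) : ⌈a / c⌉ ≤ 1 :=
  Int.ceil_le.mpr (by exact_mod_cast div_le_one_of_le₀ h hc)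

lemma smoothLevel_nonneg {p k : ℕ} {β : ℝ} (hβ : 0 ≤ β) (W : Fin p → Fin k → ℝ)
    (u : Fin p → ℝ) (j : Fin k) : 0 ≤ smoothLevel β W u j :=
  Int.ceil_nonneg <| div_nonneg (abs_nonneg _) <|
    mul_nonneg hβ (Real.iSup_nonneg fun _ => abs_nonneg _)

namespace Adjacent

variable {p : ℕ} {β : ℝ} {u u' : Fin p → ℝ}

lemma nonneg (h : Adjacent β u u') : 0 ≤ β :=
  let ⟨_, _, hle, _⟩ := h
  (abs_nonneg _).trans hle

lemma symm (h : Adjacent β u u') : Adjacent β u' u :=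
  let ⟨i₀, hne, hle, heq⟩ := h
  ⟨i₀, hne.symm, by rwa [abs_sub_comm], fun i hi => (heq i hi).symm⟩

lemma abs_sum_mul_sub_le (h : Adjacent β u u') (w : Fin p → ℝ) :
    |∑ i, w i * u i - ∑ i, w i * u' i| ≤ β * ⨆ i, |w i| := by
  obtain ⟨i₀, -, hle, heq⟩ := h
  rw [← Finset.sum_sub_distrib,
    Finset.sum_eq_single i₀ (fun i _ hi => by rw [heq i hi, sub_self]) (by simp),
    ← mul_sub, abs_mul, mul_comm β]
  exact mul_le_mul (le_ciSup (f := fun i => |w i|) (Finite.bddAbove_range _) i₀) hle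
    (abs_nonneg _) (Real.iSup_nonneg fun _ => abs_nonneg _)

variable {k : ℕ}

lemma smoothLevel_le_add_one (h : Adjacent β u u') (W : Fin p → Fin k → ℝ) (j : Fin k) :
    smoothLevel β W u j ≤ smoothLevel β W u' j + 1 :=
  ceil_abs_div_le_ceil_abs_div_add_one
    (mul_nonneg h.nonneg (Real.iSup_nonneg fun _ => abs_nonneg _)) (h.abs_sum_mul_sub_le _)

lemma smoothLevel_le_one_of_psign_ne (h : Adjacent β u u') (W : Fin p → Fin k → ℝ) (j : Fin k)
    (hs : psign (∑ i, W i j * u i) ≠ psign (∑ i, W i j * u' i)) : smoothLevel β W u j ≤ 1 :=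
  ceil_div_le_one (mul_nonneg h.nonneg (Real.iSup_nonneg fun _ => abs_nonneg _))
    ((abs_le_abs_sub_of_psign_ne hs).trans (h.abs_sum_mul_sub_le _))

lemma randomizedResponseProb_smoothLevel_le (h : Adjacent β u u') {ε : ℝ} (hε : 0 ≤ ε)
    (W : Fin p → Fin k → ℝ) (j : Fin k) (y : ℝ) :
    randomizedResponseProb (smoothLevel β W u j * ε / k) (psign (∑ i, W i j * u i)) y
      ≤ exp (ε / k) *
        randomizedResponseProb (smoothLevel β W u' j * ε / k) (psign (∑ i, W i j * u' i)) y := by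
  simp only [mul_div_assoc]
  apply randomizedResponseProb_le_exp_mul (by positivity)
  · exact_mod_cast smoothLevel_nonneg h.nonneg W u j
  · exact_mod_cast smoothLevel_nonneg h.nonneg W u' j
  · exact_mod_cast h.smoothLevel_le_add_one W j
  · exact_mod_cast h.symm.smoothLevel_le_add_one W j
  · exact fun hs => ⟨by exact_mod_cast h.smoothLevel_le_one_of_psign_ne W j hs,
      by exact_mod_cast h.symm.smoothLevel_le_one_of_psign_ne W j hs.symm⟩

end Adjacent

lemma exp_div_natCast_pow_le {ε : ℝ} (hε : 0 ≤ ε) (k : ℕ) : exp (ε / k) ^ k ≤ exp ε := by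
  rw [← exp_nat_mul, exp_le_exp]
  rcases k.eq_zero_or_pos with rfl | hk
  · simpa using hε
  · rw [mul_div_cancel₀ _ (by positivity)]

lemma prod_ofReal_le_ofReal_pow_mul {ι : Type*} [Fintype ι] {f g : ι → ℝ} {c : ℝ}
    (hc : 0 ≤ c) (h : ∀ i, f i ≤ c * g i) :
    ∏ i, ENNReal.ofReal (f i)
      ≤ ENNReal.ofReal (c ^ Fintype.card ι) * ∏ i, ENNReal.ofReal (g i) := by
  rw [ENNReal.ofReal_pow hc, ← Finset.card_univ, ← Finset.prod_const, ← Finset.prod_mul_distrib]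
  exact Finset.prod_le_prod' fun i _ => by
    rw [← ENNReal.ofReal_mul hc]; exact ENNReal.ofReal_le_ofReal (h i)

theorem dp_signrp_rr_smooth_general (p k : ℕ)
    (β ε : ℝ) (hε : 0 < ε)
    (W : Fin p → Fin k → ℝ)
    (u u' : Fin p → ℝ)
    (hadj : Adjacent β u u')
    (y : Fin k → ℝ) (hy : ∀ j, y j = 1 ∨ y j = -1) :
    (Measure.pi (fun _ : Fin k => uniform01))
        {r : Fin k → ℝ | ∀ j, signRPSmooth β ε W u r j = y j}
      ≤ ENNReal.ofReal (Real.exp ε)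
          * (Measure.pi (fun _ : Fin k => uniform01))
              {r : Fin k → ℝ | ∀ j, signRPSmooth β ε W u' r j = y j} := by
  rw [measure_signRPSmooth_eq β ε W u hy, measure_signRPSmooth_eq β ε W u' hy]
  calc _ ≤ ENNReal.ofReal (exp (ε / k) ^ Fintype.card (Fin k)) * _ :=
        prod_ofReal_le_ofReal_pow_mul (exp_pos _).le fun j =>
          hadj.randomizedResponseProb_smoothLevel_le hε.le W j (y j)
    _ ≤ _ := by
        rw [Fintype.card_fin]
        gcongr
        exact exp_div_natCast_pow_le hε.le k

/-- **DP-SignRP-RR-smooth is `ε`-DP.** For a fixed matrix `W` whose columns are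
nonzero, `β`-adjacent `u, u' ∈ [−1,1]ᵖ` with all projections nonzero, and every
`y ∈ {−1,1}ᵏ`, it holds that `Pr(s̃ = y) ≤ e^ε · Pr(s̃' = y)`, the probabilities being
over the independent smooth random sign flips. -/
theorem dp_signrp_rr_smooth (p k : ℕ) (hp : 0 < p) (hk : 0 < k)
    (β ε : ℝ) (hβ : 0 < β) (hε : 0 < ε)
    (W : Fin p → Fin k → ℝ) (hW : ∀ j, ∃ i, W i j ≠ 0)
    (u u' : Fin p → ℝ)
    (hu : ∀ i, u i ∈ Set.Icc (-1 : ℝ) 1) (hu' : ∀ i, u' i ∈ Set.Icc (-1 : ℝ) 1)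
    (hadj : Adjacent β u u')
    (hxu : ∀ j : Fin k, (∑ i : Fin p, W i j * u i) ≠ 0)
    (hxu' : ∀ j : Fin k, (∑ i : Fin p, W i j * u' i) ≠ 0)
    (y : Fin k → ℝ) (hy : ∀ j, y j = 1 ∨ y j = -1) :
    (Measure.pi (fun _ : Fin k => uniform01))
        {r : Fin k → ℝ | ∀ j, signRPSmooth β ε W u r j = y j}
      ≤ ENNReal.ofReal (Real.exp ε)
          * (Measure.pi (fun _ : Fin k => uniform01))
              {r : Fin k → ℝ | ∀ j, signRPSmooth β ε W u' r j = y j} :=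
  dp_signrp_rr_smooth_general p k β ε hε W u u' hadj y hy
end
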